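/- arXiv:2006.14139 — 6 statements merged into one kernel-verified Lean document; each statement's English description precedes it below -/
import Mathlib

section
/- For every natural number n ≥ 5, the partition lattice Part(n) is four-generated, i.e., there exists a four-element subset of Part(n) whose generated sublattice is all of Part(n). -/
/-- A lattice is *four-generated* if it has a four-element subset `X` such that the
smallest sublattice containing `X` (the closure of `X` under binary meets and joins)
is the whole lattice. -/
def FourGenerated (L : Type*) [Lattice L] : Prop :=
  ∃ X : Finset L, X.card = 4 ∧ latticeClosure (X : Set L) = Set.univ

/-!
Induction on `n`. Adjoin a new point `∞` to a generating quadruple `(P₁, P₂, Q₁, Q₂)` of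
`Part(n)`: the new generators are `Q₁` and `Q₂` with `∞` put into the blocks of `p` and of `q`
respectively, and `P₁`, `P₂` with `∞` as a singleton. Their join is `⊤` with `∞` split off, and
meeting it with the first two new generators returns `Q₁`, `Q₂` with `∞` split off; so the
generated sublattice contains a copy of `Part(n)` fixing `∞`. The atom `(p ∞)` is then cut out
as `Q₁[∞ ↦ p] ⊓ ((p q) ⊔ Q₂[∞ ↦ q])`, symmetrically `(q ∞)`, every atom `(c ∞)` is
`((c p) ⊔ (p ∞)) ⊓ ((c q) ⊔ (q ∞))`, and the atoms generate. The new quadruple satisfies the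
same side conditions with the roles of the `P`s and `Q`s exchanged, which lets the induction run
from `Part(2)`.
-/

namespace Setoid

variable {α : Type*}

def block (s : Set α) : Setoid α where
  r x y := x = y ∨ x ∈ s ∧ y ∈ s
  iseqv :=
    { refl := fun _ => Or.inl rfl
      symm := by rintro x y (rfl | ⟨hx, hy⟩) <;> tauto
      trans := by rintro x y z (rfl | ⟨hx, hy⟩) (rfl | ⟨hy', hz⟩) <;> tauto }

@[simp]
theorem block_rel {s : Set α} {x y : α} : block s x y ↔ x = y ∨ x ∈ s ∧ y ∈ s := Iff.rfl

theorem block_le_iff {s : Set α} {r : Setoid α} : block s ≤ r ↔ ∀ x ∈ s, ∀ y ∈ s, r x y := by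
  refine ⟨fun h x hx y hy => h (Or.inr ⟨hx, hy⟩), ?_⟩
  rintro h x y (rfl | ⟨hx, hy⟩)
  exacts [r.refl' x, h x hx y hy]

theorem block_pair_le {r : Setoid α} {a b : α} (h : r a b) : block {a, b} ≤ r := by
  refine block_le_iff.2 ?_
  simp only [Set.mem_insert_iff, Set.mem_singleton_iff]
  rintro x (rfl | rfl) y (rfl | rfl)
  exacts [r.refl' _, h, r.symm' h, r.refl' _]

theorem block_eq_bot {s : Set α} (hs : s.Subsingleton) : block s = ⊥ :=
  le_bot_iff.1 fun _ _ h => h.elim id fun ⟨hx, hy⟩ => hs hx hy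

theorem block_compl_singleton_rel {p z : α} : block {p}ᶜ p z ↔ z = p := by
  simp [eq_comm]

theorem block_inf_block (s t : Set α) : block s ⊓ block t = block (s ∩ t) := by
  ext x y
  simp only [inf_iff_and, block_rel, Set.mem_inter_iff]
  tauto

theorem block_sup_block {s t : Set α} (hst : (s ∩ t).Nonempty) :
    block s ⊔ block t = block (s ∪ t) := by
  obtain ⟨z, hzs, hzt⟩ := hst
  have hz : ∀ x ∈ s ∪ t, (block s ⊔ block t) x z := by
    rintro x (hx | hx)
    exacts [le_sup_left (a := block s) (Or.inr ⟨hx, hzs⟩),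
      le_sup_right (b := block t) (Or.inr ⟨hx, hzt⟩)]
  refine le_antisymm (sup_le ?_ ?_) (block_le_iff.2 fun x hx y hy => ?_)
  · exact block_le_iff.2 fun x hx y hy => Or.inr ⟨Or.inl hx, Or.inl hy⟩
  · exact block_le_iff.2 fun x hx y hy => Or.inr ⟨Or.inr hx, Or.inr hy⟩
  · exact (block s ⊔ block t).trans' (hz x hx) ((block s ⊔ block t).symm' (hz y hy))

theorem block_pair_eq_inf {a b c d : α} (hcd : c ≠ d) :
    block {a, b} = (block {a, c} ⊔ block {c, b}) ⊓ (block {a, d} ⊔ block {d, b}) := by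
  rw [block_sup_block ⟨c, by simp⟩, block_sup_block ⟨d, by simp⟩, block_inf_block]
  congr 1
  ext z
  simp only [Set.mem_insert_iff, Set.mem_singleton_iff, Set.mem_union, Set.mem_inter_iff]
  grind

theorem block_pair_injective (a : α) : Function.Injective fun b => block {a, b} := by
  intro b c (h : block {a, b} = block {a, c})
  have hb : block {a, c} a b := h ▸ Or.inr ⟨by simp, by simp⟩
  have hc : block {a, b} a c := h ▸ Or.inr ⟨by simp, by simp⟩
  simp only [block_rel, Set.mem_insert_iff, Set.mem_singleton_iff] at hb hc
  grind

theorem disjoint_iff_rel {r s : Setoid α} : Disjoint r s ↔ ∀ x y, r x y → s x y → x = y :=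
  disjoint_iff_inf_le.trans ⟨fun h _ _ hr hs => h ⟨hr, hs⟩, fun h _ _ hxy => h _ _ hxy.1 hxy.2⟩

theorem le_comap_update [DecidableEq α] {r : Setoid α} {p : α} (hp : ∀ z, r p z → z = p) (q : α) :
    r ≤ comap (Function.update id p q) r := by
  intro x y hxy
  by_cases hx : x = p
  · subst hx
    simp [hp y hxy]
  · have hy : y ≠ p := fun hy => hx (hp x (hy ▸ r.symm' hxy))
    simpa [comap_rel, Function.update_apply, hx, hy] using hxy

theorem latticeClosure_eq_univ_of_block_pair_mem [Finite α] {S : Set (Setoid α)}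
    (hbot : ⊥ ∈ latticeClosure S) (hS : ∀ a b, a ≠ b → block {a, b} ∈ latticeClosure S) :
    latticeClosure S = Set.univ := by
  classical
  cases nonempty_fintype α
  refine Set.eq_univ_of_forall fun r => ?_
  let pairs := Finset.univ.filter fun ab : α × α => r ab.1 ab.2 ∧ ab.1 ≠ ab.2
  have hr : r = pairs.sup fun ab => block {ab.1, ab.2} := by
    refine le_antisymm (fun x y hxy => ?_) (Finset.sup_le fun ab hab => ?_)
    · by_cases hxy' : x = y
      · exact hxy' ▸ Setoid.refl' _ x
      · exact Finset.le_sup (f := fun ab : α × α => block {ab.1, ab.2}) (b := (x, y))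
          (by simp [pairs, hxy, hxy']) (Or.inr ⟨by simp, by simp⟩)
    · exact block_pair_le (Finset.mem_filter.1 hab).2.1
  rw [hr]
  exact Finset.sup_induction hbot (fun _ h₁ _ h₂ => isSublattice_latticeClosure.supClosed h₁ h₂)
    fun ab hab => hS _ _ (Finset.mem_filter.1 hab).2.2

theorem fin_two_eq_bot_or_eq_top (r : Setoid (Fin 2)) : r = ⊥ ∨ r = ⊤ := by
  by_cases h : r 0 1
  · refine Or.inr (Setoid.eq_top_iff.2 fun a b => ?_)
    fin_cases a <;> fin_cases b
    exacts [r.refl' 0, h, r.symm' h, r.refl' 1]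
  · refine Or.inl (le_bot_iff.1 fun a b hab => ?_)
    fin_cases a <;> fin_cases b
    exacts [rfl, absurd hab h, absurd (r.symm' hab) h, rfl]

variable {n : ℕ}

def extendSingleton (r : Setoid (Fin n)) : Setoid (Fin (n + 1)) :=
  ker (Fin.lastCases none fun a => some (Quotient.mk r a))

def extendIntoBlock (r : Setoid (Fin n)) (p : Fin n) : Setoid (Fin (n + 1)) :=
  comap (Fin.lastCases p id) r

section

variable {r : Setoid (Fin n)} {p a b : Fin n} {x : Fin (n + 1)}

@[simp]
theorem extendSingleton_castSucc_castSucc :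
    r.extendSingleton a.castSucc b.castSucc ↔ r a b := by
  rw [extendSingleton, ker_def]
  simp [Quotient.eq]

@[simp]
theorem extendSingleton_last_left : r.extendSingleton (Fin.last n) x ↔ x = Fin.last n := by
  rw [extendSingleton, ker_def]
  induction x using Fin.lastCases <;> simp [Fin.castSucc_ne_last]

@[simp]
theorem extendSingleton_last_right : r.extendSingleton x (Fin.last n) ↔ x = Fin.last n := by
  rw [comm', extendSingleton_last_left]

@[simp]
theorem extendIntoBlock_castSucc_castSucc : r.extendIntoBlock p a.castSucc b.castSucc ↔ r a b := by
  rw [extendIntoBlock, comap_rel]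
  simp

@[simp]
theorem extendIntoBlock_castSucc_last : r.extendIntoBlock p a.castSucc (Fin.last n) ↔ r a p := by
  rw [extendIntoBlock, comap_rel]
  simp

@[simp]
theorem extendIntoBlock_last_castSucc : r.extendIntoBlock p (Fin.last n) b.castSucc ↔ r p b := by
  rw [extendIntoBlock, comap_rel]
  simp

end

theorem extendSingleton_le_iff {r : Setoid (Fin n)} {s : Setoid (Fin (n + 1))} :
    r.extendSingleton ≤ s ↔ r ≤ comap Fin.castSucc s := by
  refine ⟨fun h a b hab => h (extendSingleton_castSucc_castSucc.2 hab), fun h x y hxy => ?_⟩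
  induction x using Fin.lastCases <;> induction y using Fin.lastCases <;> simp_all
  exact h hxy

theorem gc_extendSingleton :
    GaloisConnection (extendSingleton (n := n)) (comap Fin.castSucc) :=
  fun _ _ => extendSingleton_le_iff

theorem extendSingleton_sup (r s : Setoid (Fin n)) :
    (r ⊔ s).extendSingleton = r.extendSingleton ⊔ s.extendSingleton :=
  gc_extendSingleton.l_sup

theorem extendSingleton_bot : (⊥ : Setoid (Fin n)).extendSingleton = ⊥ :=
  gc_extendSingleton.l_bot

theorem extendSingleton_inf (r s : Setoid (Fin n)) :
    (r ⊓ s).extendSingleton = r.extendSingleton ⊓ s.extendSingleton := by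
  refine le_antisymm (le_inf (gc_extendSingleton.monotone_l inf_le_left)
    (gc_extendSingleton.monotone_l inf_le_right)) ?_
  rintro x y ⟨h₁, h₂⟩
  induction x using Fin.lastCases <;> induction y using Fin.lastCases <;> simp_all
  exact ⟨h₁, h₂⟩

theorem extendSingleton_block (s : Set (Fin n)) :
    (block s).extendSingleton = block (Fin.castSucc '' s) := by
  ext x y
  induction x using Fin.lastCases <;> induction y using Fin.lastCases <;>
    simp [Fin.castSucc_ne_last, eq_comm]

theorem extendSingleton_top : (⊤ : Setoid (Fin n)).extendSingleton = block {Fin.last n}ᶜ := by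
  ext x y
  induction x using Fin.lastCases <;> induction y using Fin.lastCases <;>
    simp [Fin.castSucc_ne_last, eq_comm, top_def]

theorem extendSingleton_le_extendIntoBlock (r : Setoid (Fin n)) (p : Fin n) :
    r.extendSingleton ≤ r.extendIntoBlock p :=
  extendSingleton_le_iff.2 fun _ _ h => extendIntoBlock_castSucc_castSucc.2 h

theorem extendIntoBlock_inf_extendSingleton_top (r : Setoid (Fin n)) (p : Fin n) :
    r.extendIntoBlock p ⊓ (⊤ : Setoid (Fin n)).extendSingleton = r.extendSingleton := by
  refine le_antisymm ?_ (le_inf (extendSingleton_le_extendIntoBlock r p)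
    (gc_extendSingleton.monotone_l le_top))
  rintro x y ⟨h₁, h₂⟩
  induction x using Fin.lastCases <;> induction y using Fin.lastCases <;> simp_all

theorem extendIntoBlock_inf_sup_eq_block {Q₁ Q₂ : Setoid (Fin n)} {p q : Fin n}
    (hQ : Disjoint Q₁ Q₂) (hp : ∀ z, Q₂ p z → z = p) (hpq : ∀ z, Q₁ p z → ¬ Q₂ q z) :
    Q₁.extendIntoBlock p ⊓ ((block {p, q}).extendSingleton ⊔ Q₂.extendIntoBlock q) =
      block {p.castSucc, Fin.last n} := by
  -- The join in the statement lies below `comap e₂ Q₂`; off `S` both `e₁` and `e₂` act as the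
  -- identity, so there `Disjoint Q₁ Q₂` separates points.
  set S : Set (Fin (n + 1)) := {p.castSucc, Fin.last n}
  let e₁ : Fin (n + 1) → Fin n := Fin.lastCases p id
  let e₂ : Fin (n + 1) → Fin n := Function.update id p q ∘ Fin.lastCases q id
  have hle : (block {p, q}).extendSingleton ⊔ Q₂.extendIntoBlock q ≤ comap e₂ Q₂ := by
    refine sup_le (extendSingleton_le_iff.2 (block_le_iff.2 fun x hx y hy => ?_))
      fun x y h => le_comap_update hp q h
    have he₂ : ∀ z ∈ ({p, q} : Set (Fin n)), e₂ z.castSucc = q := by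
      rintro z (rfl | rfl) <;> simp [e₂, Function.update_apply]
    show Q₂ (e₂ x.castSucc) (e₂ y.castSucc)
    rw [he₂ x hx, he₂ y hy]
  have hS : ∀ x, x ∈ S ↔ Q₁ (e₁ x) p ∧ Q₂ (e₂ x) q := by
    intro x
    induction x using Fin.lastCases with
    | last => simp [S, e₁, e₂, Function.update_apply]
    | cast a =>
      by_cases ha : a = p
      · simp [S, e₁, e₂, ha]
      · simpa [S, e₁, e₂, ha, Fin.castSucc_ne_last] using
          fun h h' => hpq a (Q₁.symm' h) (Q₂.symm' h')
  have hout : ∀ x ∉ S, x = (e₁ x).castSucc ∧ e₂ x = e₁ x := by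
    intro x hx
    induction x using Fin.lastCases with
    | last => simp [S] at hx
    | cast a => simp_all [S, e₁, e₂]
  refine le_antisymm ?_ (block_pair_le ⟨extendIntoBlock_castSucc_last.2 (Q₁.refl' p), ?_⟩)
  · rintro x y ⟨h₁, h₂⟩
    replace h₂ : Q₂ (e₂ x) (e₂ y) := hle h₂
    have hmem : x ∈ S ↔ y ∈ S := by
      rw [hS, hS]
      exact ⟨fun h => ⟨Q₁.trans' (Q₁.symm' h₁) h.1, Q₂.trans' (Q₂.symm' h₂) h.2⟩,
        fun h => ⟨Q₁.trans' h₁ h.1, Q₂.trans' h₂ h.2⟩⟩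
    by_cases hx : x ∈ S
    · exact Or.inr ⟨hx, hmem.1 hx⟩
    · obtain ⟨hx₁, hx₂⟩ := hout x hx
      obtain ⟨hy₁, hy₂⟩ := hout y (mt hmem.2 hx)
      rw [hx₂, hy₂] at h₂
      have h : e₁ x = e₁ y := disjoint_iff_rel.1 hQ _ _ h₁ h₂
      exact Or.inl (hx₁.trans ((congrArg Fin.castSucc h).trans hy₁.symm))
  · exact Setoid.trans' _
      (le_sup_left (b := Q₂.extendIntoBlock q) (extendSingleton_castSucc_castSucc.2
        (Or.inr ⟨by simp, by simp⟩)))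
      (le_sup_right (a := (block {p, q}).extendSingleton)
        (extendIntoBlock_castSucc_last.2 (Q₂.refl' q)))

theorem isCompl_extendIntoBlock {Q₁ Q₂ : Setoid (Fin n)} {p q : Fin n} (hQ : Disjoint Q₁ Q₂)
    (hsup : Q₁ ⊔ Q₂ = block {p}ᶜ) (hpq : p ≠ q) :
    IsCompl (Q₁.extendIntoBlock p) (Q₂.extendIntoBlock q) := by
  have hp : ∀ z, (Q₁ ⊔ Q₂) p z → z = p := fun z h => block_compl_singleton_rel.1 (hsup ▸ h)
  have hp₁ : ∀ z, Q₁ z p → z = p := fun z h => hp z (le_sup_left (b := Q₂) (Q₁.symm' h))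
  have hqp : ¬ Q₂ q p := fun h => hpq (hp q (le_sup_right (a := Q₁) (Q₂.symm' h))).symm
  refine ⟨disjoint_iff_rel.2 fun x y h₁ h₂ => ?_, codisjoint_iff.2 (eq_top_iff.2 ?_)⟩
  · induction x using Fin.lastCases with
    | last =>
      induction y using Fin.lastCases with
      | last => rfl
      | cast b =>
        obtain rfl := hp₁ b (Q₁.symm' (extendIntoBlock_last_castSucc.1 h₁))
        exact absurd (extendIntoBlock_last_castSucc.1 h₂) hqp
    | cast a =>
      induction y using Fin.lastCases with
      | last =>
        obtain rfl := hp₁ a (extendIntoBlock_castSucc_last.1 h₁)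
        exact absurd (Q₂.symm' (extendIntoBlock_castSucc_last.1 h₂)) hqp
      | cast b =>
        exact congrArg Fin.castSucc (disjoint_iff_rel.1 hQ a b
          (extendIntoBlock_castSucc_castSucc.1 h₁) (extendIntoBlock_castSucc_castSucc.1 h₂))
  · set R := Q₁.extendIntoBlock p ⊔ Q₂.extendIntoBlock q
    have hq : R q.castSucc (Fin.last n) :=
      le_sup_right (a := Q₁.extendIntoBlock p) (extendIntoBlock_castSucc_last.2 (Q₂.refl' q))
    have hlast : ∀ x, R x (Fin.last n) := by
      intro x
      induction x using Fin.lastCases with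
      | last => exact R.refl' _
      | cast a =>
        by_cases ha : a = p
        · exact le_sup_left (b := Q₂.extendIntoBlock q)
            (extendIntoBlock_castSucc_last.2 (ha ▸ Q₁.refl' a))
        · have haq : (Q₁ ⊔ Q₂) a q := by
            rw [hsup]
            exact Or.inr ⟨ha, Ne.symm hpq⟩
          have hle : (Q₁ ⊔ Q₂).extendSingleton ≤ R := by
            rw [extendSingleton_sup]
            exact sup_le_sup (extendSingleton_le_extendIntoBlock Q₁ p)
              (extendSingleton_le_extendIntoBlock Q₂ q)
          exact R.trans' (hle (extendSingleton_castSucc_castSucc.2 haq)) hq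
    exact fun x y => R.trans' (hlast x) (R.symm' (hlast y))

theorem latticeClosure_extend_eq_univ {P₁ P₂ Q₁ Q₂ : Setoid (Fin n)} {p q : Fin n}
    (hS : latticeClosure {P₁, P₂, Q₁, Q₂} = Set.univ) (hP : Codisjoint P₁ P₂)
    (hQ : Disjoint Q₁ Q₂) (hp₁ : ∀ z, Q₁ p z → z = p) (hp₂ : ∀ z, Q₂ p z → z = p)
    (hq : ∀ z, Q₁ q z → z = q) (hpq : p ≠ q) :
    latticeClosure {Q₁.extendIntoBlock p, Q₂.extendIntoBlock q,
      P₁.extendSingleton, P₂.extendSingleton} = Set.univ := by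
  set C := latticeClosure {Q₁.extendIntoBlock p, Q₂.extendIntoBlock q,
    P₁.extendSingleton, P₂.extendSingleton}
  have hC : IsSublattice C := isSublattice_latticeClosure
  have hQ₁ : Q₁.extendIntoBlock p ∈ C := subset_latticeClosure (by simp)
  have hQ₂ : Q₂.extendIntoBlock q ∈ C := subset_latticeClosure (by simp)
  have hP₁ : P₁.extendSingleton ∈ C := subset_latticeClosure (by simp)
  have hP₂ : P₂.extendSingleton ∈ C := subset_latticeClosure (by simp)
  have htop : (⊤ : Setoid (Fin n)).extendSingleton ∈ C := by
    rw [← hP.eq_top, extendSingleton_sup]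
    exact hC.supClosed hP₁ hP₂
  have hext : ∀ r : Setoid (Fin n), r.extendSingleton ∈ C := by
    have himage : extendSingleton '' latticeClosure {P₁, P₂, Q₁, Q₂} ⊆ C := by
      rw [image_latticeClosure _ _ extendSingleton_sup extendSingleton_inf]
      refine latticeClosure_min ?_ hC
      rintro _ ⟨r, hr, rfl⟩
      rcases hr with rfl | rfl | rfl | rfl
      · exact hP₁
      · exact hP₂
      · rw [← extendIntoBlock_inf_extendSingleton_top r p]
        exact hC.infClosed hQ₁ htop
      · rw [← extendIntoBlock_inf_extendSingleton_top r q]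
        exact hC.infClosed hQ₂ htop
    exact fun r => himage ⟨r, hS ▸ Set.mem_univ r, rfl⟩
  have hpq₁ : ∀ z, Q₁ p z → ¬ Q₂ q z := fun z hz h => hpq (hp₂ q (hp₁ z hz ▸ Q₂.symm' h)).symm
  have hpLast : block {p.castSucc, Fin.last n} ∈ C := by
    rw [← extendIntoBlock_inf_sup_eq_block hQ hp₂ hpq₁]
    exact hC.infClosed hQ₁ (hC.supClosed (hext _) hQ₂)
  have hqLast : block {q.castSucc, Fin.last n} ∈ C := by
    rw [← extendIntoBlock_inf_sup_eq_block hQ.symm hq fun z hz h => hpq₁ z h hz]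
    exact hC.infClosed hQ₂ (hC.supClosed (hext _) hQ₁)
  have hLast : ∀ c : Fin n, block {c.castSucc, Fin.last n} ∈ C := by
    intro c
    rw [block_pair_eq_inf ((Fin.castSucc_injective n).ne hpq), ← Set.image_pair,
      ← extendSingleton_block, ← Set.image_pair, ← extendSingleton_block]
    exact hC.infClosed (hC.supClosed (hext _) hpLast) (hC.supClosed (hext _) hqLast)
  refine latticeClosure_eq_univ_of_block_pair_mem (extendSingleton_bot ▸ hext ⊥) fun x y hxy => ?_
  induction x using Fin.lastCases with
  | last =>
    induction y using Fin.lastCases with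
    | last => exact absurd rfl hxy
    | cast b => exact Set.pair_comm (b.castSucc) (Fin.last n) ▸ hLast b
  | cast a =>
    induction y using Fin.lastCases with
    | last => exact hLast a
    | cast b => simpa only [Set.image_pair, extendSingleton_block] using hext (block {a, b})

end Setoid

open Setoid

structure GeneratingQuadruple (n : ℕ) where
  P₁ : Setoid (Fin n)
  P₂ : Setoid (Fin n)
  Q₁ : Setoid (Fin n)
  Q₂ : Setoid (Fin n)
  p : Fin n
  q : Fin n
  w : Fin n
  latticeClosure_eq_univ : latticeClosure {P₁, P₂, Q₁, Q₂} = Set.univ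
  isCompl_P₁_P₂ : IsCompl P₁ P₂
  disjoint_Q₁_Q₂ : Disjoint Q₁ Q₂
  Q₁_sup_Q₂ : Q₁ ⊔ Q₂ = block {p}ᶜ
  p_ne_q : p ≠ q
  Q₁_singleton_q : ∀ z, Q₁ q z → z = q
  P₁_singleton_w : ∀ z, P₁ w z → z = w

namespace GeneratingQuadruple

variable {n : ℕ}

def two : GeneratingQuadruple 2 where
  P₁ := ⊥
  P₂ := ⊤
  Q₁ := ⊥
  Q₂ := ⊥
  p := 0
  q := 1
  w := 0
  latticeClosure_eq_univ := Set.eq_univ_of_forall fun r =>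
    subset_latticeClosure <| by rcases fin_two_eq_bot_or_eq_top r with rfl | rfl <;> simp
  isCompl_P₁_P₂ := isCompl_bot_top
  disjoint_Q₁_Q₂ := disjoint_bot_left
  Q₁_sup_Q₂ := by
    rw [sup_idem, block_eq_bot]
    intro a ha b hb
    fin_cases a <;> fin_cases b <;> simp_all
  p_ne_q := by decide
  Q₁_singleton_q _ h := h.symm
  P₁_singleton_w _ h := h.symm

def succ (G : GeneratingQuadruple n) : GeneratingQuadruple (n + 1) where
  P₁ := G.Q₁.extendIntoBlock G.p
  P₂ := G.Q₂.extendIntoBlock G.q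
  Q₁ := G.P₁.extendSingleton
  Q₂ := G.P₂.extendSingleton
  p := Fin.last n
  q := G.w.castSucc
  w := G.q.castSucc
  latticeClosure_eq_univ := by
    have hp : ∀ z, (G.Q₁ ⊔ G.Q₂) G.p z → z = G.p := fun z h =>
      block_compl_singleton_rel.1 (G.Q₁_sup_Q₂ ▸ h)
    exact latticeClosure_extend_eq_univ G.latticeClosure_eq_univ G.isCompl_P₁_P₂.codisjoint
      G.disjoint_Q₁_Q₂ (fun z h => hp z (le_sup_left (b := G.Q₂) h))
      (fun z h => hp z (le_sup_right (a := G.Q₁) h)) G.Q₁_singleton_q G.p_ne_q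
  isCompl_P₁_P₂ := isCompl_extendIntoBlock G.disjoint_Q₁_Q₂ G.Q₁_sup_Q₂ G.p_ne_q
  disjoint_Q₁_Q₂ := by
    rw [disjoint_iff, ← extendSingleton_inf, G.isCompl_P₁_P₂.inf_eq_bot, extendSingleton_bot]
  Q₁_sup_Q₂ := by
    rw [← extendSingleton_sup, G.isCompl_P₁_P₂.sup_eq_top, extendSingleton_top]
  p_ne_q := (Fin.castSucc_ne_last G.w).symm
  Q₁_singleton_q z h := by
    induction z using Fin.lastCases with
    | last => simp at h
    | cast b => simp [G.P₁_singleton_w b (by simpa using h)]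
  P₁_singleton_w z h := by
    induction z using Fin.lastCases with
    | last => exact absurd (G.Q₁_singleton_q _ (by simpa using h)) G.p_ne_q
    | cast b => simp [G.Q₁_singleton_q b (by simpa using h)]

end GeneratingQuadruple

def generatingQuadruple : (k : ℕ) → GeneratingQuadruple (k + 2)
  | 0 => .two
  | k + 1 => (generatingQuadruple k).succ

theorem fourGenerated_of_latticeClosure_eq_univ {L : Type*} [Lattice L] {a b c d : L}
    (h : latticeClosure {a, b, c, d} = Set.univ) (hL : ∃ t : Finset L, 4 ≤ t.card) :
    FourGenerated L := by
  classical
  obtain ⟨t, ht⟩ := hL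
  obtain ⟨u, hsu, -, hu⟩ := Finset.exists_subsuperset_card_eq
    (Finset.subset_union_left (s₂ := t)) (Finset.card_le_four (a := a) (b := b) (c := c) (d := d))
    (ht.trans (Finset.card_le_card Finset.subset_union_right))
  refine ⟨u, hu, Set.eq_univ_of_univ_subset ?_⟩
  rw [← h]
  exact latticeClosure_mono (by simpa using Finset.coe_subset.2 hsu)

/-- For every natural number `n ≥ 5`, the partition lattice `Part(n)`, i.e. the lattice
`Setoid (Fin n)` of all equivalence relations on an `n`-element set, is four-generated. -/
theorem part_fourGenerated (n : ℕ) (hn : 5 ≤ n) : FourGenerated (Setoid (Fin n)) := by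
  obtain ⟨k, rfl⟩ : ∃ k, n = k + 2 := ⟨n - 2, by omega⟩
  refine fourGenerated_of_latticeClosure_eq_univ (generatingQuadruple k).latticeClosure_eq_univ
    ⟨Finset.univ.map ⟨_, block_pair_injective 0⟩, ?_⟩
  simp only [Finset.card_map, Finset.card_univ, Fintype.card_fin]
  omega
end

section
/- The partition lattice Part(6) has a four-element generating set that is not an antichain; more precisely, it has a four-element generating set containing exactly one pair of distinct comparable elements (a (1+1+2)-generating set). -/
private def fP0 : Fin 6 → Fin 6 := ![0,0,1,2,0,3]
private def fP1 : Fin 6 → Fin 6 := ![0,0,1,1,0,1]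
private def fP2 : Fin 6 → Fin 6 := ![0,1,1,1,2,0]
private def fP3 : Fin 6 → Fin 6 := ![0,1,0,2,2,2]
private def fP4 : Fin 6 → Fin 6 := ![0,1,2,3,4,5]
private def fP5 : Fin 6 → Fin 6 := ![0,1,2,3,4,3]
private def fP6 : Fin 6 → Fin 6 := ![0,0,0,0,1,0]
private def fP7 : Fin 6 → Fin 6 := ![0,0,1,2,3,4]
private def fP8 : Fin 6 → Fin 6 := ![0,1,0,2,3,2]
private def fP9 : Fin 6 → Fin 6 := ![0,0,0,1,0,1]
private def fP10 : Fin 6 → Fin 6 := ![0,1,1,2,3,4]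
private def fP11 : Fin 6 → Fin 6 := ![0,1,2,2,3,4]
private def fP12 : Fin 6 → Fin 6 := ![0,0,1,1,0,2]
private def fP13 : Fin 6 → Fin 6 := ![0,0,1,1,2,3]
private def fP14 : Fin 6 → Fin 6 := ![0,0,0,0,1,2]
private def fP15 : Fin 6 → Fin 6 := ![0,1,0,2,3,4]
private def fP16 : Fin 6 → Fin 6 := ![0,1,0,0,0,0]
private def fP17 : Fin 6 → Fin 6 := ![0,1,2,2,3,0]
private def fP18 : Fin 6 → Fin 6 := ![0,0,1,1,0,0]
private def fP19 : Fin 6 → Fin 6 := ![0,1,2,3,4,4]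
private def fP20 : Fin 6 → Fin 6 := ![0,0,1,2,0,2]
private def fP21 : Fin 6 → Fin 6 := ![0,1,2,3,0,3]
private def fP22 : Fin 6 → Fin 6 := ![0,1,2,0,0,0]
private def fP23 : Fin 6 → Fin 6 := ![0,1,2,0,3,4]
private def fP24 : Fin 6 → Fin 6 := ![0,1,2,3,0,4]
private def fP25 : Fin 6 → Fin 6 := ![0,0,1,1,2,0]
private def fP26 : Fin 6 → Fin 6 := ![0,1,2,3,4,0]
private def fP27 : Fin 6 → Fin 6 := ![0,0,1,0,0,0]
private def fP28 : Fin 6 → Fin 6 := ![0,1,1,1,2,3]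
private def fP29 : Fin 6 → Fin 6 := ![0,1,2,1,3,4]
private def fP30 : Fin 6 → Fin 6 := ![0,1,2,2,3,2]
private def fP31 : Fin 6 → Fin 6 := ![0,0,1,2,3,2]
private def fP32 : Fin 6 → Fin 6 := ![0,0,0,1,1,1]
private def fP33 : Fin 6 → Fin 6 := ![0,1,1,1,0,0]
private def fP34 : Fin 6 → Fin 6 := ![0,1,1,2,3,3]
private def fP35 : Fin 6 → Fin 6 := ![0,1,1,1,1,1]
private def fP36 : Fin 6 → Fin 6 := ![0,1,2,3,1,4]
private def fP37 : Fin 6 → Fin 6 := ![0,0,1,2,3,3]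
private def fP38 : Fin 6 → Fin 6 := ![0,0,1,2,0,0]
private def fP39 : Fin 6 → Fin 6 := ![0,1,1,1,2,1]
private def fP40 : Fin 6 → Fin 6 := ![0,1,2,3,4,1]
private def fP41 : Fin 6 → Fin 6 := ![0,0,0,1,0,2]
private def fP42 : Fin 6 → Fin 6 := ![0,1,2,2,2,2]
private def fP43 : Fin 6 → Fin 6 := ![0,1,2,3,2,4]
private def fP44 : Fin 6 → Fin 6 := ![0,0,0,1,0,0]
private def fP45 : Fin 6 → Fin 6 := ![0,1,2,3,4,2]
private def fP46 : Fin 6 → Fin 6 := ![0,1,2,3,3,3]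
private def fP47 : Fin 6 → Fin 6 := ![0,0,0,0,0,1]
private def fP48 : Fin 6 → Fin 6 := ![0,1,2,3,3,4]


private lemma ker_le_ker {f g : Fin 6 → Fin 6} (h : ∀ x y, f x = f y → g x = g y) :
    Setoid.ker f ≤ Setoid.ker g :=
  Setoid.le_def.2 fun hxy => Setoid.ker_def.2 (h _ _ (Setoid.ker_def.1 hxy))

private lemma ker_ne {f g : Fin 6 → Fin 6} (x y : Fin 6) (h1 : f x = f y) (h2 : g x ≠ g y) :
    Setoid.ker f ≠ Setoid.ker g := fun e =>
  h2 (Setoid.ker_def.1 (e ▸ Setoid.ker_def.2 h1))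

private lemma ker_not_le {f g : Fin 6 → Fin 6} (x y : Fin 6) (h1 : f x = f y)
    (h2 : g x ≠ g y) : ¬ Setoid.ker f ≤ Setoid.ker g := fun le =>
  h2 (Setoid.ker_def.1 (Setoid.le_def.1 le (Setoid.ker_def.2 h1)))

private lemma ker_inf {f g h : Fin 6 → Fin 6}
    (H : ∀ x y : Fin 6, (f x = f y ∧ g x = g y) ↔ h x = h y) :
    Setoid.ker f ⊓ Setoid.ker g = Setoid.ker h := by
  apply le_antisymm
  · rw [Setoid.le_def]
    intro x y hxy
    rw [Setoid.inf_iff_and] at hxy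
    exact Setoid.ker_def.2 ((H x y).1 ⟨Setoid.ker_def.1 hxy.1, Setoid.ker_def.1 hxy.2⟩)
  · exact le_inf (ker_le_ker fun x y hh => ((H x y).2 hh).1)
      (ker_le_ker fun x y hh => ((H x y).2 hh).2)

private lemma ker_sup {f g h : Fin 6 → Fin 6}
    (h1 : ∀ x y, f x = f y → h x = h y)
    (h2 : ∀ x y, g x = g y → h x = h y)
    (h3 : ∀ x y : Fin 6, h x = h y → ∃ c1 c2 c3 c4 : Fin 6,
      (f x = f c1 ∨ g x = g c1) ∧ (f c1 = f c2 ∨ g c1 = g c2) ∧ (f c2 = f c3 ∨ g c2 = g c3) ∧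
      (f c3 = f c4 ∨ g c3 = g c4) ∧ (f c4 = f y ∨ g c4 = g y)) :
    Setoid.ker f ⊔ Setoid.ker g = Setoid.ker h := by
  apply le_antisymm (sup_le (ker_le_ker h1) (ker_le_ker h2))
  rw [Setoid.le_def]
  intro x y hxy
  have step : ∀ a b : Fin 6, (f a = f b ∨ g a = g b) → (Setoid.ker f ⊔ Setoid.ker g) a b := by
    rintro a b (hab | hab)
    · exact Setoid.le_def.1 le_sup_left (Setoid.ker_def.2 hab)
    · exact Setoid.le_def.1 le_sup_right (Setoid.ker_def.2 hab)
  obtain ⟨c1, c2, c3, c4, s1, s2, s3, s4, s5⟩ := h3 x y (Setoid.ker_def.1 hxy)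
  exact (Setoid.ker f ⊔ Setoid.ker g).trans' (step _ _ s1)
    ((Setoid.ker f ⊔ Setoid.ker g).trans' (step _ _ s2)
    ((Setoid.ker f ⊔ Setoid.ker g).trans' (step _ _ s3)
    ((Setoid.ker f ⊔ Setoid.ker g).trans' (step _ _ s4) (step _ _ s5))))

private def atom (i j : Fin 6) : Setoid (Fin 6) :=
  ⟨fun x y => x = y ∨ (x = i ∧ y = j) ∨ (x = j ∧ y = i), by
    refine ⟨fun x => Or.inl rfl, ?_, ?_⟩
    · rintro x y (rfl | ⟨rfl, rfl⟩ | ⟨rfl, rfl⟩)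
      · exact Or.inl rfl
      · exact Or.inr (Or.inr ⟨rfl, rfl⟩)
      · exact Or.inr (Or.inl ⟨rfl, rfl⟩)
    · intro x y z h1 h2
      rcases h1 with rfl | ⟨rfl, rfl⟩ | ⟨rfl, rfl⟩ <;>
        rcases h2 with rfl | ⟨h2a, h2b⟩ | ⟨h2a, h2b⟩ <;> aesop⟩

private lemma atom_rel_iff {i j x y : Fin 6} :
    atom i j x y ↔ (x = y ∨ (x = i ∧ y = j) ∨ (x = j ∧ y = i)) := Iff.rfl

private lemma atom_le {i j : Fin 6} {s : Setoid (Fin 6)} (h : s i j) : atom i j ≤ s := by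
  rw [Setoid.le_def]
  rintro x y (rfl | ⟨rfl, rfl⟩ | ⟨rfl, rfl⟩)
  · exact s.refl x
  · exact h
  · exact s.symm h

private lemma atom_rel_self (i j : Fin 6) : atom i j i j := Or.inr (Or.inl ⟨rfl, rfl⟩)

private lemma atom_eq (i j : Fin 6) (h : Fin 6 → Fin 6)
    (H : ∀ x y : Fin 6, (x = y ∨ (x = i ∧ y = j) ∨ (x = j ∧ y = i)) ↔ h x = h y) :
    atom i j = Setoid.ker h :=
  Setoid.ext fun x y => (H x y).trans Setoid.ker_def.symm

private lemma finset_sup_mem {c : Set (Setoid (Fin 6))} (hc : SupClosed c)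
    (hbot : (⊥ : Setoid (Fin 6)) ∈ c) {ι : Type} [DecidableEq ι] (T : Finset ι)
    (f : ι → Setoid (Fin 6)) (hT : ∀ i ∈ T, f i ∈ c) : T.sup f ∈ c := by
  induction T using Finset.induction with
  | empty => simpa using hbot
  | insert _ _ ha ih =>
    rw [Finset.sup_insert]
    exact hc (hT _ (Finset.mem_insert_self _ _))
      (ih fun i hi => hT _ (Finset.mem_insert_of_mem hi))

private lemma setoid_eq_sup_atoms (s : Setoid (Fin 6)) [DecidablePred fun p : Fin 6 × Fin 6 => s p.1 p.2] :
    s = (Finset.univ.filter fun p : Fin 6 × Fin 6 => s p.1 p.2).sup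
      (fun p => atom p.1 p.2) := by
  apply le_antisymm
  · rw [Setoid.le_def]
    intro x y hxy
    have hmem : (x, y) ∈ Finset.univ.filter fun p : Fin 6 × Fin 6 => s p.1 p.2 := by
      simp [hxy]
    exact Setoid.le_def.1 (Finset.le_sup (f := fun p : Fin 6 × Fin 6 => atom p.1 p.2) hmem)
      (atom_rel_self x y)
  · refine Finset.sup_le fun p hp => atom_le ?_
    simpa using (Finset.mem_filter.1 hp).2

private def Xset : Set (Setoid (Fin 6)) := {Setoid.ker fP0, Setoid.ker fP1, Setoid.ker fP2, Setoid.ker fP3}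

private lemma memP0 : Setoid.ker fP0 ∈ latticeClosure Xset :=
  subset_latticeClosure (by simp [Xset])

private lemma memP1 : Setoid.ker fP1 ∈ latticeClosure Xset :=
  subset_latticeClosure (by simp [Xset])

private lemma memP2 : Setoid.ker fP2 ∈ latticeClosure Xset :=
  subset_latticeClosure (by simp [Xset])

private lemma memP3 : Setoid.ker fP3 ∈ latticeClosure Xset :=
  subset_latticeClosure (by simp [Xset])

private lemma memP4 : Setoid.ker fP4 ∈ latticeClosure Xset := by
  have h : Setoid.ker fP3 ⊓ Setoid.ker fP2 = Setoid.ker fP4 := ker_inf (by decide)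
  exact h ▸ isSublattice_latticeClosure.infClosed memP3 memP2

private lemma memP5 : Setoid.ker fP5 ∈ latticeClosure Xset := by
  have h : Setoid.ker fP3 ⊓ Setoid.ker fP1 = Setoid.ker fP5 := ker_inf (by decide)
  exact h ▸ isSublattice_latticeClosure.infClosed memP3 memP1

private lemma memP6 : Setoid.ker fP6 ∈ latticeClosure Xset := by
  have h : Setoid.ker fP5 ⊔ Setoid.ker fP2 = Setoid.ker fP6 := ker_sup (by decide) (by decide) (by decide)
  exact h ▸ isSublattice_latticeClosure.supClosed memP5 memP2

private lemma memP7 : Setoid.ker fP7 ∈ latticeClosure Xset := by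
  have h : Setoid.ker fP6 ⊓ Setoid.ker fP0 = Setoid.ker fP7 := ker_inf (by decide)
  exact h ▸ isSublattice_latticeClosure.infClosed memP6 memP0

private lemma memP8 : Setoid.ker fP8 ∈ latticeClosure Xset := by
  have h : Setoid.ker fP6 ⊓ Setoid.ker fP3 = Setoid.ker fP8 := ker_inf (by decide)
  exact h ▸ isSublattice_latticeClosure.infClosed memP6 memP3

private lemma memP9 : Setoid.ker fP9 ∈ latticeClosure Xset := by
  have h : Setoid.ker fP0 ⊔ Setoid.ker fP8 = Setoid.ker fP9 := ker_sup (by decide) (by decide) (by decide)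
  exact h ▸ isSublattice_latticeClosure.supClosed memP0 memP8

private lemma memP10 : Setoid.ker fP10 ∈ latticeClosure Xset := by
  have h : Setoid.ker fP9 ⊓ Setoid.ker fP2 = Setoid.ker fP10 := ker_inf (by decide)
  exact h ▸ isSublattice_latticeClosure.infClosed memP9 memP2

private lemma memP11 : Setoid.ker fP11 ∈ latticeClosure Xset := by
  have h : Setoid.ker fP2 ⊓ Setoid.ker fP1 = Setoid.ker fP11 := ker_inf (by decide)
  exact h ▸ isSublattice_latticeClosure.infClosed memP2 memP1

private lemma memP12 : Setoid.ker fP12 ∈ latticeClosure Xset := by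
  have h : Setoid.ker fP11 ⊔ Setoid.ker fP0 = Setoid.ker fP12 := ker_sup (by decide) (by decide) (by decide)
  exact h ▸ isSublattice_latticeClosure.supClosed memP11 memP0

private lemma memP13 : Setoid.ker fP13 ∈ latticeClosure Xset := by
  have h : Setoid.ker fP6 ⊓ Setoid.ker fP12 = Setoid.ker fP13 := ker_inf (by decide)
  exact h ▸ isSublattice_latticeClosure.infClosed memP6 memP12

private lemma memP14 : Setoid.ker fP14 ∈ latticeClosure Xset := by
  have h : Setoid.ker fP10 ⊔ Setoid.ker fP13 = Setoid.ker fP14 := ker_sup (by decide) (by decide) (by decide)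
  exact h ▸ isSublattice_latticeClosure.supClosed memP10 memP13

private lemma memP15 : Setoid.ker fP15 ∈ latticeClosure Xset := by
  have h : Setoid.ker fP14 ⊓ Setoid.ker fP8 = Setoid.ker fP15 := ker_inf (by decide)
  exact h ▸ isSublattice_latticeClosure.infClosed memP14 memP8

private lemma memP16 : Setoid.ker fP16 ∈ latticeClosure Xset := by
  have h : Setoid.ker fP11 ⊔ Setoid.ker fP3 = Setoid.ker fP16 := ker_sup (by decide) (by decide) (by decide)
  exact h ▸ isSublattice_latticeClosure.supClosed memP11 memP3

private lemma memP17 : Setoid.ker fP17 ∈ latticeClosure Xset := by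
  have h : Setoid.ker fP16 ⊓ Setoid.ker fP2 = Setoid.ker fP17 := ker_inf (by decide)
  exact h ▸ isSublattice_latticeClosure.infClosed memP16 memP2

private lemma memP18 : Setoid.ker fP18 ∈ latticeClosure Xset := by
  have h : Setoid.ker fP0 ⊔ Setoid.ker fP17 = Setoid.ker fP18 := ker_sup (by decide) (by decide) (by decide)
  exact h ▸ isSublattice_latticeClosure.supClosed memP0 memP17

private lemma memP19 : Setoid.ker fP19 ∈ latticeClosure Xset := by
  have h : Setoid.ker fP18 ⊓ Setoid.ker fP3 = Setoid.ker fP19 := ker_inf (by decide)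
  exact h ▸ isSublattice_latticeClosure.infClosed memP18 memP3

private lemma memP20 : Setoid.ker fP20 ∈ latticeClosure Xset := by
  have h : Setoid.ker fP5 ⊔ Setoid.ker fP0 = Setoid.ker fP20 := ker_sup (by decide) (by decide) (by decide)
  exact h ▸ isSublattice_latticeClosure.supClosed memP5 memP0

private lemma memP21 : Setoid.ker fP21 ∈ latticeClosure Xset := by
  have h : Setoid.ker fP16 ⊓ Setoid.ker fP20 = Setoid.ker fP21 := ker_inf (by decide)
  exact h ▸ isSublattice_latticeClosure.infClosed memP16 memP20

private lemma memP22 : Setoid.ker fP22 ∈ latticeClosure Xset := by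
  have h : Setoid.ker fP19 ⊔ Setoid.ker fP21 = Setoid.ker fP22 := ker_sup (by decide) (by decide) (by decide)
  exact h ▸ isSublattice_latticeClosure.supClosed memP19 memP21

private lemma memP23 : Setoid.ker fP23 ∈ latticeClosure Xset := by
  have h : Setoid.ker fP22 ⊓ Setoid.ker fP14 = Setoid.ker fP23 := ker_inf (by decide)
  exact h ▸ isSublattice_latticeClosure.infClosed memP22 memP14

private lemma memP24 : Setoid.ker fP24 ∈ latticeClosure Xset := by
  have h : Setoid.ker fP16 ⊓ Setoid.ker fP0 = Setoid.ker fP24 := ker_inf (by decide)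
  exact h ▸ isSublattice_latticeClosure.infClosed memP16 memP0

private lemma memP25 : Setoid.ker fP25 ∈ latticeClosure Xset := by
  have h : Setoid.ker fP13 ⊔ Setoid.ker fP17 = Setoid.ker fP25 := ker_sup (by decide) (by decide) (by decide)
  exact h ▸ isSublattice_latticeClosure.supClosed memP13 memP17

private lemma memP26 : Setoid.ker fP26 ∈ latticeClosure Xset := by
  have h : Setoid.ker fP22 ⊓ Setoid.ker fP25 = Setoid.ker fP26 := ker_inf (by decide)
  exact h ▸ isSublattice_latticeClosure.infClosed memP22 memP25

private lemma memP27 : Setoid.ker fP27 ∈ latticeClosure Xset := by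
  have h : Setoid.ker fP19 ⊔ Setoid.ker fP20 = Setoid.ker fP27 := ker_sup (by decide) (by decide) (by decide)
  exact h ▸ isSublattice_latticeClosure.supClosed memP19 memP20

private lemma memP28 : Setoid.ker fP28 ∈ latticeClosure Xset := by
  have h : Setoid.ker fP10 ⊔ Setoid.ker fP11 = Setoid.ker fP28 := ker_sup (by decide) (by decide) (by decide)
  exact h ▸ isSublattice_latticeClosure.supClosed memP10 memP11

private lemma memP29 : Setoid.ker fP29 ∈ latticeClosure Xset := by
  have h : Setoid.ker fP27 ⊓ Setoid.ker fP28 = Setoid.ker fP29 := ker_inf (by decide)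
  exact h ▸ isSublattice_latticeClosure.infClosed memP27 memP28

private lemma memP30 : Setoid.ker fP30 ∈ latticeClosure Xset := by
  have h : Setoid.ker fP11 ⊔ Setoid.ker fP5 = Setoid.ker fP30 := ker_sup (by decide) (by decide) (by decide)
  exact h ▸ isSublattice_latticeClosure.supClosed memP11 memP5

private lemma memP31 : Setoid.ker fP31 ∈ latticeClosure Xset := by
  have h : Setoid.ker fP20 ⊓ Setoid.ker fP6 = Setoid.ker fP31 := ker_inf (by decide)
  exact h ▸ isSublattice_latticeClosure.infClosed memP20 memP6

private lemma memP32 : Setoid.ker fP32 ∈ latticeClosure Xset := by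
  have h : Setoid.ker fP31 ⊔ Setoid.ker fP3 = Setoid.ker fP32 := ker_sup (by decide) (by decide) (by decide)
  exact h ▸ isSublattice_latticeClosure.supClosed memP31 memP3

private lemma memP33 : Setoid.ker fP33 ∈ latticeClosure Xset := by
  have h : Setoid.ker fP24 ⊔ Setoid.ker fP2 = Setoid.ker fP33 := ker_sup (by decide) (by decide) (by decide)
  exact h ▸ isSublattice_latticeClosure.supClosed memP24 memP2

private lemma memP34 : Setoid.ker fP34 ∈ latticeClosure Xset := by
  have h : Setoid.ker fP32 ⊓ Setoid.ker fP33 = Setoid.ker fP34 := ker_inf (by decide)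
  exact h ▸ isSublattice_latticeClosure.infClosed memP32 memP33

private lemma memP35 : Setoid.ker fP35 ∈ latticeClosure Xset := by
  have h : Setoid.ker fP30 ⊔ Setoid.ker fP34 = Setoid.ker fP35 := ker_sup (by decide) (by decide) (by decide)
  exact h ▸ isSublattice_latticeClosure.supClosed memP30 memP34

private lemma memP36 : Setoid.ker fP36 ∈ latticeClosure Xset := by
  have h : Setoid.ker fP0 ⊓ Setoid.ker fP35 = Setoid.ker fP36 := ker_inf (by decide)
  exact h ▸ isSublattice_latticeClosure.infClosed memP0 memP35

private lemma memP37 : Setoid.ker fP37 ∈ latticeClosure Xset := by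
  have h : Setoid.ker fP18 ⊓ Setoid.ker fP32 = Setoid.ker fP37 := ker_inf (by decide)
  exact h ▸ isSublattice_latticeClosure.infClosed memP18 memP32

private lemma memP38 : Setoid.ker fP38 ∈ latticeClosure Xset := by
  have h : Setoid.ker fP24 ⊔ Setoid.ker fP37 = Setoid.ker fP38 := ker_sup (by decide) (by decide) (by decide)
  exact h ▸ isSublattice_latticeClosure.supClosed memP24 memP37

private lemma memP39 : Setoid.ker fP39 ∈ latticeClosure Xset := by
  have h : Setoid.ker fP10 ⊔ Setoid.ker fP30 = Setoid.ker fP39 := ker_sup (by decide) (by decide) (by decide)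
  exact h ▸ isSublattice_latticeClosure.supClosed memP10 memP30

private lemma memP40 : Setoid.ker fP40 ∈ latticeClosure Xset := by
  have h : Setoid.ker fP38 ⊓ Setoid.ker fP39 = Setoid.ker fP40 := ker_inf (by decide)
  exact h ▸ isSublattice_latticeClosure.infClosed memP38 memP39

private lemma memP41 : Setoid.ker fP41 ∈ latticeClosure Xset := by
  have h : Setoid.ker fP10 ⊔ Setoid.ker fP0 = Setoid.ker fP41 := ker_sup (by decide) (by decide) (by decide)
  exact h ▸ isSublattice_latticeClosure.supClosed memP10 memP0

private lemma memP42 : Setoid.ker fP42 ∈ latticeClosure Xset := by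
  have h : Setoid.ker fP30 ⊔ Setoid.ker fP19 = Setoid.ker fP42 := ker_sup (by decide) (by decide) (by decide)
  exact h ▸ isSublattice_latticeClosure.supClosed memP30 memP19

private lemma memP43 : Setoid.ker fP43 ∈ latticeClosure Xset := by
  have h : Setoid.ker fP41 ⊓ Setoid.ker fP42 = Setoid.ker fP43 := ker_inf (by decide)
  exact h ▸ isSublattice_latticeClosure.infClosed memP41 memP42

private lemma memP44 : Setoid.ker fP44 ∈ latticeClosure Xset := by
  have h : Setoid.ker fP0 ⊔ Setoid.ker fP34 = Setoid.ker fP44 := ker_sup (by decide) (by decide) (by decide)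
  exact h ▸ isSublattice_latticeClosure.supClosed memP0 memP34

private lemma memP45 : Setoid.ker fP45 ∈ latticeClosure Xset := by
  have h : Setoid.ker fP30 ⊓ Setoid.ker fP44 = Setoid.ker fP45 := ker_inf (by decide)
  exact h ▸ isSublattice_latticeClosure.infClosed memP30 memP44

private lemma memP46 : Setoid.ker fP46 ∈ latticeClosure Xset := by
  have h : Setoid.ker fP19 ⊔ Setoid.ker fP5 = Setoid.ker fP46 := ker_sup (by decide) (by decide) (by decide)
  exact h ▸ isSublattice_latticeClosure.supClosed memP19 memP5

private lemma memP47 : Setoid.ker fP47 ∈ latticeClosure Xset := by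
  have h : Setoid.ker fP10 ⊔ Setoid.ker fP12 = Setoid.ker fP47 := ker_sup (by decide) (by decide) (by decide)
  exact h ▸ isSublattice_latticeClosure.supClosed memP10 memP12

private lemma memP48 : Setoid.ker fP48 ∈ latticeClosure Xset := by
  have h : Setoid.ker fP46 ⊓ Setoid.ker fP47 = Setoid.ker fP48 := ker_inf (by decide)
  exact h ▸ isSublattice_latticeClosure.infClosed memP46 memP47

private lemma amem_0_0 : atom 0 0 ∈ latticeClosure Xset := by
  rw [atom_eq 0 0 fP4 (by decide)]
  exact memP4

private lemma amem_0_1 : atom 0 1 ∈ latticeClosure Xset := by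
  rw [atom_eq 0 1 fP7 (by decide)]
  exact memP7

private lemma amem_0_2 : atom 0 2 ∈ latticeClosure Xset := by
  rw [atom_eq 0 2 fP15 (by decide)]
  exact memP15

private lemma amem_0_3 : atom 0 3 ∈ latticeClosure Xset := by
  rw [atom_eq 0 3 fP23 (by decide)]
  exact memP23

private lemma amem_0_4 : atom 0 4 ∈ latticeClosure Xset := by
  rw [atom_eq 0 4 fP24 (by decide)]
  exact memP24

private lemma amem_0_5 : atom 0 5 ∈ latticeClosure Xset := by
  rw [atom_eq 0 5 fP26 (by decide)]
  exact memP26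

private lemma amem_1_0 : atom 1 0 ∈ latticeClosure Xset := by
  rw [atom_eq 1 0 fP7 (by decide)]
  exact memP7

private lemma amem_1_1 : atom 1 1 ∈ latticeClosure Xset := by
  rw [atom_eq 1 1 fP4 (by decide)]
  exact memP4

private lemma amem_1_2 : atom 1 2 ∈ latticeClosure Xset := by
  rw [atom_eq 1 2 fP10 (by decide)]
  exact memP10

private lemma amem_1_3 : atom 1 3 ∈ latticeClosure Xset := by
  rw [atom_eq 1 3 fP29 (by decide)]
  exact memP29

private lemma amem_1_4 : atom 1 4 ∈ latticeClosure Xset := by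
  rw [atom_eq 1 4 fP36 (by decide)]
  exact memP36

private lemma amem_1_5 : atom 1 5 ∈ latticeClosure Xset := by
  rw [atom_eq 1 5 fP40 (by decide)]
  exact memP40

private lemma amem_2_0 : atom 2 0 ∈ latticeClosure Xset := by
  rw [atom_eq 2 0 fP15 (by decide)]
  exact memP15

private lemma amem_2_1 : atom 2 1 ∈ latticeClosure Xset := by
  rw [atom_eq 2 1 fP10 (by decide)]
  exact memP10

private lemma amem_2_2 : atom 2 2 ∈ latticeClosure Xset := by
  rw [atom_eq 2 2 fP4 (by decide)]
  exact memP4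

private lemma amem_2_3 : atom 2 3 ∈ latticeClosure Xset := by
  rw [atom_eq 2 3 fP11 (by decide)]
  exact memP11

private lemma amem_2_4 : atom 2 4 ∈ latticeClosure Xset := by
  rw [atom_eq 2 4 fP43 (by decide)]
  exact memP43

private lemma amem_2_5 : atom 2 5 ∈ latticeClosure Xset := by
  rw [atom_eq 2 5 fP45 (by decide)]
  exact memP45

private lemma amem_3_0 : atom 3 0 ∈ latticeClosure Xset := by
  rw [atom_eq 3 0 fP23 (by decide)]
  exact memP23

private lemma amem_3_1 : atom 3 1 ∈ latticeClosure Xset := by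
  rw [atom_eq 3 1 fP29 (by decide)]
  exact memP29

private lemma amem_3_2 : atom 3 2 ∈ latticeClosure Xset := by
  rw [atom_eq 3 2 fP11 (by decide)]
  exact memP11

private lemma amem_3_3 : atom 3 3 ∈ latticeClosure Xset := by
  rw [atom_eq 3 3 fP4 (by decide)]
  exact memP4

private lemma amem_3_4 : atom 3 4 ∈ latticeClosure Xset := by
  rw [atom_eq 3 4 fP48 (by decide)]
  exact memP48

private lemma amem_3_5 : atom 3 5 ∈ latticeClosure Xset := by
  rw [atom_eq 3 5 fP5 (by decide)]
  exact memP5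

private lemma amem_4_0 : atom 4 0 ∈ latticeClosure Xset := by
  rw [atom_eq 4 0 fP24 (by decide)]
  exact memP24

private lemma amem_4_1 : atom 4 1 ∈ latticeClosure Xset := by
  rw [atom_eq 4 1 fP36 (by decide)]
  exact memP36

private lemma amem_4_2 : atom 4 2 ∈ latticeClosure Xset := by
  rw [atom_eq 4 2 fP43 (by decide)]
  exact memP43

private lemma amem_4_3 : atom 4 3 ∈ latticeClosure Xset := by
  rw [atom_eq 4 3 fP48 (by decide)]
  exact memP48

private lemma amem_4_4 : atom 4 4 ∈ latticeClosure Xset := by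
  rw [atom_eq 4 4 fP4 (by decide)]
  exact memP4

private lemma amem_4_5 : atom 4 5 ∈ latticeClosure Xset := by
  rw [atom_eq 4 5 fP19 (by decide)]
  exact memP19

private lemma amem_5_0 : atom 5 0 ∈ latticeClosure Xset := by
  rw [atom_eq 5 0 fP26 (by decide)]
  exact memP26

private lemma amem_5_1 : atom 5 1 ∈ latticeClosure Xset := by
  rw [atom_eq 5 1 fP40 (by decide)]
  exact memP40

private lemma amem_5_2 : atom 5 2 ∈ latticeClosure Xset := by
  rw [atom_eq 5 2 fP45 (by decide)]
  exact memP45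

private lemma amem_5_3 : atom 5 3 ∈ latticeClosure Xset := by
  rw [atom_eq 5 3 fP5 (by decide)]
  exact memP5

private lemma amem_5_4 : atom 5 4 ∈ latticeClosure Xset := by
  rw [atom_eq 5 4 fP19 (by decide)]
  exact memP19

private lemma amem_5_5 : atom 5 5 ∈ latticeClosure Xset := by
  rw [atom_eq 5 5 fP4 (by decide)]
  exact memP4

private lemma all_atoms_mem : ∀ i j : Fin 6, atom i j ∈ latticeClosure Xset := by
  intro i j
  fin_cases i <;> fin_cases j
  exacts [amem_0_0, amem_0_1, amem_0_2, amem_0_3, amem_0_4, amem_0_5, amem_1_0, amem_1_1, amem_1_2, amem_1_3, amem_1_4, amem_1_5, amem_2_0, amem_2_1, amem_2_2, amem_2_3, amem_2_4, amem_2_5, amem_3_0, amem_3_1, amem_3_2, amem_3_3, amem_3_4, amem_3_5, amem_4_0, amem_4_1, amem_4_2, amem_4_3, amem_4_4, amem_4_5, amem_5_0, amem_5_1, amem_5_2, amem_5_3, amem_5_4, amem_5_5]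


private lemma xsetLatticeClosure_univ : latticeClosure Xset = Set.univ := by
  apply Set.eq_univ_of_forall
  intro s
  classical
  rw [setoid_eq_sup_atoms s]
  exact finset_sup_mem isSublattice_latticeClosure.supClosed
    (by rw [show (⊥ : Setoid (Fin 6)) = atom 0 0 from
          le_antisymm bot_le (atom_le ((⊥ : Setoid (Fin 6)).refl 0))]
        exact amem_0_0) _ _ (fun p _ => all_atoms_mem p.1 p.2)

/-- The lattice `Part(6) = Setoid (Fin 6)` of all equivalence relations on a six-element
set has a four-element generating set that is not an antichain; more precisely, it has a
four-element generating set containing exactly one pair of distinct comparable elements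
(a `(1+1+2)`-generating set). -/
theorem part6_has_one_one_two_generating_set :
    ∃ X : Finset (Setoid (Fin 6)),
      X.card = 4 ∧
      latticeClosure (X : Set (Setoid (Fin 6))) = Set.univ ∧
      ∃ a ∈ X, ∃ b ∈ X, a < b ∧
        ∀ x ∈ X, ∀ y ∈ X, x ≠ y → (x ≤ y ∨ y ≤ x) →
          (x = a ∧ y = b) ∨ (x = b ∧ y = a) := by
  classical
  have hAB : Setoid.ker fP0 ≠ Setoid.ker fP1 := Ne.symm (ker_ne 2 3 (by decide) (by decide))
  have hAC : Setoid.ker fP0 ≠ Setoid.ker fP2 := ker_ne 0 1 (by decide) (by decide)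
  have hAD : Setoid.ker fP0 ≠ Setoid.ker fP3 := ker_ne 0 1 (by decide) (by decide)
  have hBC : Setoid.ker fP1 ≠ Setoid.ker fP2 := ker_ne 0 1 (by decide) (by decide)
  have hBD : Setoid.ker fP1 ≠ Setoid.ker fP3 := ker_ne 0 1 (by decide) (by decide)
  have hCD : Setoid.ker fP2 ≠ Setoid.ker fP3 := ker_ne 0 5 (by decide) (by decide)
  have n02 : ¬ Setoid.ker fP0 ≤ Setoid.ker fP2 := ker_not_le 0 1 (by decide) (by decide)
  have n20 : ¬ Setoid.ker fP2 ≤ Setoid.ker fP0 := ker_not_le 0 5 (by decide) (by decide)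
  have n03 : ¬ Setoid.ker fP0 ≤ Setoid.ker fP3 := ker_not_le 0 1 (by decide) (by decide)
  have n30 : ¬ Setoid.ker fP3 ≤ Setoid.ker fP0 := ker_not_le 0 2 (by decide) (by decide)
  have n12 : ¬ Setoid.ker fP1 ≤ Setoid.ker fP2 := ker_not_le 0 1 (by decide) (by decide)
  have n21 : ¬ Setoid.ker fP2 ≤ Setoid.ker fP1 := ker_not_le 0 5 (by decide) (by decide)
  have n13 : ¬ Setoid.ker fP1 ≤ Setoid.ker fP3 := ker_not_le 0 1 (by decide) (by decide)
  have n31 : ¬ Setoid.ker fP3 ≤ Setoid.ker fP1 := ker_not_le 0 2 (by decide) (by decide)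
  have n23 : ¬ Setoid.ker fP2 ≤ Setoid.ker fP3 := ker_not_le 0 5 (by decide) (by decide)
  have n32 : ¬ Setoid.ker fP3 ≤ Setoid.ker fP2 := ker_not_le 0 2 (by decide) (by decide)
  refine ⟨{Setoid.ker fP0, Setoid.ker fP1, Setoid.ker fP2, Setoid.ker fP3}, ?_, ?_,
    Setoid.ker fP0, by simp, Setoid.ker fP1, by simp, ?_, ?_⟩
  · rw [Finset.card_insert_of_notMem (by simp [hAB, hAC, hAD]),
      Finset.card_insert_of_notMem (by simp [hBC, hBD]),
      Finset.card_insert_of_notMem (by simp [hCD]), Finset.card_singleton]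
  · have hco : (({Setoid.ker fP0, Setoid.ker fP1, Setoid.ker fP2, Setoid.ker fP3} :
        Finset (Setoid (Fin 6))) : Set (Setoid (Fin 6))) = Xset := by
      simp [Xset]
    rw [hco, xsetLatticeClosure_univ]
  · exact lt_of_le_of_ne (ker_le_ker (by decide)) hAB
  · intro x hx y hy hne hcomp
    simp only [Finset.mem_insert, Finset.mem_singleton] at hx hy
    rcases hx with rfl | rfl | rfl | rfl <;> rcases hy with rfl | rfl | rfl | rfl
    · exact absurd rfl hne
    · exact Or.inl ⟨rfl, rfl⟩
    · exact absurd hcomp (by simp [n02, n20])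
    · exact absurd hcomp (by simp [n03, n30])
    · exact Or.inr ⟨rfl, rfl⟩
    · exact absurd rfl hne
    · exact absurd hcomp (by simp [n12, n21])
    · exact absurd hcomp (by simp [n13, n31])
    · exact absurd hcomp (by simp [n20, n02])
    · exact absurd hcomp (by simp [n21, n12])
    · exact absurd rfl hne
    · exact absurd hcomp (by simp [n23, n32])
    · exact absurd hcomp (by simp [n30, n03])
    · exact absurd hcomp (by simp [n31, n13])
    · exact absurd hcomp (by simp [n32, n23])
    · exact absurd rfl hne
end

section
/- In the lattice Equ(6) of all equivalence relations on the set {1,2,…,6}, define α to be the equivalence whose only nonsingleton block is {4,5,6}, ε the equivalence whose only nonsingleton block is {1,2,3}, β = α ⊔ ε, γ = (the equivalence with only nonsingleton block {1,2,4}) ⊔ equ(3,5), and δ = (the equivalence with only nonsingleton block {1,3,6}) ⊔ equ(2,5). Then α < β and the four-element set {α,β,γ,δ} generates the lattice Equ(6). -/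
/-!
Meeting with `β` cuts `γ` and `δ` down to the atoms `equ(1,2)` and `equ(1,3)`; a few more meets
and joins give the atoms `equ(i,j)` along the Hamiltonian cycle `1-2-4-5-6-3-1`.  A sublattice of
`Equ(A)`, `|A| ≥ 3`, containing the atoms along a Hamiltonian cycle is all of `Equ(A)`: deleting a
vertex `x` leaves a path, whose atoms join to the equivalence with the single block `A ∖ {x}`;
meets of these coatoms give every atom, and joins of atoms give everything.

The identities in `Equ(6)` are checked by evaluating each lattice term as the kernel of a
labelling of `Fin 6`: joining with an atom merges two labels, a meet pairs labels.
-/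

/-- The least equivalence relation on `A` identifying `u` and `v`
(its only nonsingleton block is `{u, v}`; it is `⊥` when `u = v`). -/
def equ {A : Type*} (u v : A) : Setoid A := sInf {s : Setoid A | s u v}

variable {A B C : Type*}

theorem equ_le_iff {u v : A} {s : Setoid A} : equ u v ≤ s ↔ s u v :=
  ⟨fun h => h fun _ hs => hs, fun h => sInf_le h⟩

theorem equ_rel (u v : A) : equ u v u v :=
  equ_le_iff.1 le_rfl

section Block

def blockSetoid (P : Set A) : Setoid A where
  r x y := x = y ∨ x ∈ P ∧ y ∈ P
  iseqv :=
    { refl := fun _ => Or.inl rfl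
      symm := fun h => h.imp Eq.symm And.symm
      trans := by
        rintro x y z (rfl | ⟨hx, hy⟩) (rfl | ⟨hy', hz⟩)
        exacts [Or.inl rfl, Or.inr ⟨hy', hz⟩, Or.inr ⟨hx, hy⟩, Or.inr ⟨hx, hz⟩] }

variable {P Q : Set A}

theorem blockSetoid_mono (h : P ⊆ Q) : blockSetoid P ≤ blockSetoid Q :=
  fun _ _ hxy => hxy.imp_right fun hxy => ⟨h hxy.1, h hxy.2⟩

theorem equ_eq_blockSetoid (u v : A) : equ u v = blockSetoid {u, v} := by
  refine le_antisymm (equ_le_iff.2 (Or.inr ⟨by simp, by simp⟩)) fun x y hxy => ?_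
  rcases hxy with rfl | ⟨hx, hy⟩
  · exact Setoid.refl' _ x
  · have huv := equ_rel u v
    rcases hx with rfl | rfl <;> rcases hy with rfl | rfl
    exacts [Setoid.refl' _ _, huv, Setoid.symm' _ huv, Setoid.refl' _ _]

theorem blockSetoid_sup_blockSetoid (h : (P ∩ Q).Nonempty) :
    blockSetoid P ⊔ blockSetoid Q = blockSetoid (P ∪ Q) := by
  refine le_antisymm (sup_le (blockSetoid_mono Set.subset_union_left)
    (blockSetoid_mono Set.subset_union_right)) fun x y hxy => ?_
  obtain ⟨w, hwP, hwQ⟩ := h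
  have toSup {R : Set A} {a b : A} (hR : blockSetoid R ≤ blockSetoid P ⊔ blockSetoid Q)
      (ha : a ∈ R) (hb : b ∈ R) : (blockSetoid P ⊔ blockSetoid Q) a b :=
    hR (Or.inr ⟨ha, hb⟩)
  have toW {a : A} (ha : a ∈ P ∪ Q) : (blockSetoid P ⊔ blockSetoid Q) a w :=
    ha.elim (fun ha => toSup le_sup_left ha hwP) fun ha => toSup le_sup_right ha hwQ
  rcases hxy with rfl | ⟨hx, hy⟩
  · exact Setoid.refl' _ x
  · exact Setoid.trans' _ (toW hx) (Setoid.symm' _ (toW hy))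

theorem blockSetoid_mem_of_isChain {S : Set (Setoid A)} (hS : SupClosed S) {l : List A}
    (hl : 2 ≤ l.length) (hchain : l.IsChain fun a b => equ a b ∈ S) :
    blockSetoid {z | z ∈ l} ∈ S := by
  induction l with
  | nil => simp at hl
  | cons x l ih =>
    rcases l with _ | ⟨y, l⟩
    · simp at hl
    rw [List.isChain_cons_cons] at hchain
    rcases l with _ | ⟨w, l⟩
    · have hpair : {z | z ∈ [x, y]} = {x, y} := by ext z; simp [Set.mem_ofPred_eq]
      exact hpair ▸ equ_eq_blockSetoid x y ▸ hchain.1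
    have hsplit : {z | z ∈ x :: y :: w :: l} = {x, y} ∪ {z | z ∈ y :: w :: l} := by
      ext z
      simp only [Set.mem_ofPred_eq, Set.mem_union, Set.mem_insert_iff, Set.mem_singleton_iff,
        List.mem_cons]
      tauto
    rw [hsplit, ← blockSetoid_sup_blockSetoid ⟨y, by simp⟩, ← equ_eq_blockSetoid]
    exact hS hchain.1 (ih (by simp) hchain.2)

theorem blockSetoid_mem_of_compl_mem [Finite A] {S : Set (Setoid A)} (hS : InfClosed S)
    (h : ∀ x, blockSetoid {x}ᶜ ∈ S) (hP : ∃ w, w ∉ P) : blockSetoid P ∈ S := by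
  classical
  have := Fintype.ofFinite A
  have hne : (Finset.univ.filter (· ∉ P)).Nonempty :=
    let ⟨w, hw⟩ := hP; ⟨w, by simpa using hw⟩
  have heq : blockSetoid P = (Finset.univ.filter (· ∉ P)).inf' hne fun x => blockSetoid {x}ᶜ := by
    refine le_antisymm (Finset.le_inf' _ _ fun x hx => blockSetoid_mono ?_) fun y z hyz => ?_
    · simp only [Finset.mem_filter, Finset.mem_univ, true_and] at hx
      exact fun z hz (hzx : z = x) => hx (hzx ▸ hz)
    · have hout : ∀ x ∉ P, y = z ∨ y ≠ x ∧ z ≠ x := fun x hx =>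
        Finset.inf'_le (fun x => blockSetoid {x}ᶜ) (by simpa using hx) hyz
      by_cases hyz' : y = z
      · exact Or.inl hyz'
      · refine Or.inr ⟨?_, ?_⟩ <;> by_contra hmem
        · simpa [hyz'] using hout y hmem
        · simpa [hyz'] using hout z hmem
  exact heq ▸ hS.finsetInf'_mem hne fun x _ => h x

theorem mem_of_forall_equ_mem [Finite A] [Nonempty A] {S : Set (Setoid A)} (hS : SupClosed S)
    (h : ∀ u v : A, equ u v ∈ S) (t : Setoid A) : t ∈ S := by
  classical
  have := Fintype.ofFinite A
  obtain ⟨a⟩ := ‹Nonempty A›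
  have hne : (Finset.univ.filter fun p : A × A => t p.1 p.2).Nonempty :=
    ⟨(a, a), by simp⟩
  have heq : t = (Finset.univ.filter fun p : A × A => t p.1 p.2).sup' hne fun p => equ p.1 p.2 :=
    le_antisymm (fun x y hxy => Finset.le_sup' (fun p : A × A => equ p.1 p.2) (b := (x, y))
      (by simpa using hxy) (equ_rel x y))
      (Finset.sup'_le _ _ fun p hp => equ_le_iff.2 (by simpa using hp))
  exact heq ▸ hS.finsetSup'_mem hne fun p _ => h p.1 p.2

theorem eq_univ_of_blockSetoid_compl_mem [Finite A] (h3 : 3 ≤ Nat.card A) {S : Set (Setoid A)}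
    (hS : IsSublattice S) (h : ∀ x, blockSetoid {x}ᶜ ∈ S) : S = Set.univ := by
  classical
  have := Fintype.ofFinite A
  have : Nonempty A := Nat.card_pos_iff.1 (by omega) |>.1
  refine Set.eq_univ_of_forall (mem_of_forall_equ_mem hS.supClosed fun u v => ?_)
  obtain ⟨w, hw⟩ : (({u, v} : Finset A)ᶜ).Nonempty := by
    rw [← Finset.card_pos, Finset.card_compl]
    have := Finset.card_le_two (a := u) (b := v)
    rw [Nat.card_eq_fintype_card] at h3
    omega
  rw [equ_eq_blockSetoid]
  exact blockSetoid_mem_of_compl_mem hS.infClosed h ⟨w, by simpa using hw⟩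

/-- The cycle condition is stated on `l ++ l`, which contains every rotation of `l`. -/
theorem eq_univ_of_isChain_cycle {S : Set (Setoid A)} (hS : IsSublattice S) (l : List A)
    (hl : l.Nodup) (hcover : ∀ x, x ∈ l) (h3 : 3 ≤ l.length)
    (hchain : (l ++ l).IsChain fun a b => equ a b ∈ S) : S = Set.univ := by
  classical
  have := Fintype.ofList l hcover
  refine eq_univ_of_blockSetoid_compl_mem ?_ hS fun x => ?_
  · rw [Nat.card_eq_fintype_card]; exact h3.trans hl.length_le_card
  obtain ⟨p, q, rfl⟩ := List.append_of_mem (hcover x)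
  have hx : x ∉ p ∧ x ∉ q := by simpa using (List.nodup_cons.1 (List.nodup_middle.1 hl)).1
  have hpath : {z | z ∈ q ++ p} = {x}ᶜ := by
    ext z
    have := hcover z
    simp only [List.mem_append, List.mem_cons] at this
    simp only [List.mem_append, Set.mem_compl_iff, Set.mem_singleton_iff, Set.mem_ofPred_eq]
    constructor
    · rintro hz rfl
      tauto
    · tauto
  rw [← hpath]
  refine blockSetoid_mem_of_isChain hS.supClosed (by simp at h3 ⊢; omega) (hchain.infix ?_)
  exact ⟨p ++ [x], x :: q, by simp⟩

end Block

section Kernel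

def mergeLabels [DecidableEq B] (f : A → B) (u v : A) : A → B :=
  fun x => if f x = f v then f u else f x

theorem Setoid.ker_sup_equ [DecidableEq B] (f : A → B) (u v : A) :
    Setoid.ker f ⊔ equ u v = Setoid.ker (mergeLabels f u v) := by
  refine le_antisymm (sup_le (fun x y h => ?_) (equ_le_iff.2 ?_)) fun x y h => ?_
  · simp only [Setoid.ker_def, mergeLabels] at h ⊢
    simp [h]
  · simp [Setoid.ker_def, mergeLabels]
  · have hf : Setoid.ker f ≤ Setoid.ker f ⊔ equ u v := le_sup_left
    have huv : (Setoid.ker f ⊔ equ u v) u v := (le_sup_right : equ u v ≤ _) (equ_rel u v)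
    simp only [Setoid.ker_def, mergeLabels] at h
    split_ifs at h with hx hy hy
    · exact hf (hx.trans hy.symm)
    · exact Setoid.trans' _ (hf hx) (Setoid.trans' _ (Setoid.symm' _ huv) (hf h))
    · exact Setoid.trans' _ (hf h) (Setoid.trans' _ huv (hf hy.symm))
    · exact hf h

theorem equ_eq_ker [DecidableEq A] (u v : A) : equ u v = Setoid.ker (mergeLabels id u v) := by
  rw [← Setoid.ker_sup_equ, Setoid.ker_eq_bot_iff.2 Function.injective_id, bot_sup_eq]

theorem Setoid.ker_sup_ker_mergeLabels_id [DecidableEq A] [DecidableEq B] (f : A → B) (u v : A) :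
    Setoid.ker f ⊔ Setoid.ker (mergeLabels id u v) = Setoid.ker (mergeLabels f u v) := by
  rw [← equ_eq_ker, Setoid.ker_sup_equ]

theorem Setoid.ker_inf_ker (f : A → B) (g : A → C) :
    Setoid.ker f ⊓ Setoid.ker g = Setoid.ker fun x => (f x, g x) := by
  ext x y
  simp [Setoid.inf_iff_and, Setoid.ker_def]

theorem Setoid.ker_eq_ker_iff {f : A → B} {g : A → C} :
    Setoid.ker f = Setoid.ker g ↔ ∀ x y, f x = f y ↔ g x = g y := by
  simp [Setoid.ext_iff, Setoid.ker_def]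

end Kernel

section Equ6

variable {α ε β γ δ : Setoid (Fin 6)}

/-- The terms are chosen so that, after substituting the generators and reassociating joins to
the left, every join has an atom on its right: the shape `Setoid.ker_sup_ker_mergeLabels_id`
evaluates. -/
theorem equ6_cycle_edges (hα : α = equ 3 4 ⊔ equ 4 5) (hε : ε = equ 0 1 ⊔ equ 1 2)
    (hβ : β = α ⊔ ε) (hγ : γ = (equ 0 1 ⊔ equ 1 3) ⊔ equ 2 4)
    (hδ : δ = (equ 0 2 ⊔ equ 2 5) ⊔ equ 1 4) :
    equ 0 1 = β ⊓ γ ∧ equ 2 0 = β ⊓ δ ∧ equ 3 4 = α ⊓ (γ ⊔ equ 2 0) ∧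
    equ 4 5 = α ⊓ (δ ⊔ equ 0 1) ∧ equ 1 3 = γ ⊓ (δ ⊓ (γ ⊔ equ 2 0) ⊔ α) ∧
    equ 5 2 = δ ⊓ (γ ⊓ (δ ⊔ equ 0 1) ⊔ α) := by
  subst hα hε hβ hγ hδ
  refine ⟨?_, ?_, ?_, ?_, ?_, ?_⟩ <;>
  · simp -failIfUnchanged only [← sup_assoc]
    simp only [equ_eq_ker, Setoid.ker_sup_ker_mergeLabels_id, Setoid.ker_inf_ker]
    rw [Setoid.ker_eq_ker_iff]
    decide

theorem equ6_alpha_ne_beta (hα : α = equ 3 4 ⊔ equ 4 5) (hε : ε = equ 0 1 ⊔ equ 1 2)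
    (hβ : β = α ⊔ ε) : α ≠ β := by
  subst hα hε hβ
  simp only [← sup_assoc]
  simp only [equ_eq_ker, Setoid.ker_sup_ker_mergeLabels_id]
  rw [Ne, Setoid.ker_eq_ker_iff]
  decide

end Equ6

/-- In `Equ(6) = Setoid (Fin 6)` (the elements `1,…,6` of the paper correspond to
`0,…,5 : Fin 6`): let `α` be the equivalence whose only nonsingleton block is `{4,5,6}`,
`ε` the one with only nonsingleton block `{1,2,3}`, `β = α ⊔ ε`,
`γ = (equivalence with only nonsingleton block {1,2,4}) ⊔ equ(3,5)`, and
`δ = (equivalence with only nonsingleton block {1,3,6}) ⊔ equ(2,5)`.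
Then `α < β` and `{α, β, γ, δ}` generates the lattice `Equ(6)`. -/
theorem equ6_explicit_generating_set (α ε β γ δ : Setoid (Fin 6))
    (hα : α = equ 3 4 ⊔ equ 4 5)
    (hε : ε = equ 0 1 ⊔ equ 1 2)
    (hβ : β = α ⊔ ε)
    (hγ : γ = (equ 0 1 ⊔ equ 1 3) ⊔ equ 2 4)
    (hδ : δ = (equ 0 2 ⊔ equ 2 5) ⊔ equ 1 4) :
    α < β ∧ latticeClosure {α, β, γ, δ} = Set.univ := by
  refine ⟨lt_of_le_of_ne (hβ ▸ le_sup_left) (equ6_alpha_ne_beta hα hε hβ), ?_⟩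
  set L := latticeClosure {α, β, γ, δ}
  have hL : IsSublattice L := isSublattice_latticeClosure
  have mα : α ∈ L := subset_latticeClosure (by simp)
  have mβ : β ∈ L := subset_latticeClosure (by simp)
  have mγ : γ ∈ L := subset_latticeClosure (by simp)
  have mδ : δ ∈ L := subset_latticeClosure (by simp)
  obtain ⟨e01, e20, e34, e45, e13, e52⟩ := equ6_cycle_edges hα hε hβ hγ hδ
  have m01 : equ 0 1 ∈ L := e01 ▸ hL.infClosed mβ mγ
  have m20 : equ 2 0 ∈ L := e20 ▸ hL.infClosed mβ mδ
  have m34 : equ 3 4 ∈ L := e34 ▸ hL.infClosed mα (hL.supClosed mγ m20)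
  have m45 : equ 4 5 ∈ L := e45 ▸ hL.infClosed mα (hL.supClosed mδ m01)
  have m13 : equ 1 3 ∈ L :=
    e13 ▸ hL.infClosed mγ (hL.supClosed (hL.infClosed mδ (hL.supClosed mγ m20)) mα)
  have m52 : equ 5 2 ∈ L :=
    e52 ▸ hL.infClosed mδ (hL.supClosed (hL.infClosed mγ (hL.supClosed mδ m01)) mα)
  refine eq_univ_of_isChain_cycle hL [0, 1, 3, 4, 5, 2] (by decide) (by decide) (by decide) ?_
  simp only [List.cons_append, List.nil_append, List.isChain_cons_cons, List.isChain_singleton,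
    and_true]
  exact ⟨m01, m13, m34, m45, m52, m20, m01, m13, m34, m45, m52⟩
end

section
/- Let u and t be positive integers with u − 1 ≥ ⌈(t−1)/2⌉. Then sba(u,t), the maximum size of an antichain in DBV(u,t), equals the binomial coefficient C(t−1, ⌈(t−1)/2⌉). -/
/-- The *airiness* of a bit vector `x : Fin t → Bool`: the largest number `u` such that
`x` has `u` consecutive `false` (i.e. zero) entries. -/
noncomputable def air {t : ℕ} (x : Fin t → Bool) : ℕ :=
  sSup {u : ℕ | ∃ j : ℕ, j + u ≤ t ∧ ∀ i : Fin t, j ≤ i.val → i.val < j + u → x i = false}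

/-- `DBV u t`: the set of bit vectors of dimension `t` whose first coordinate is `1`
(`true`) and whose airiness is strictly less than `u`, ordered componentwise. -/
def DBV (u t : ℕ) : Set (Fin t → Bool) :=
  {x | (∀ i : Fin t, i.val = 0 → x i = true) ∧ air x < u}

/-- `sba u t`: the maximum size of an antichain in `DBV u t`. -/
noncomputable def sba (u t : ℕ) : ℕ :=
  sSup {n : ℕ | ∃ X : Finset (Fin t → Bool),
    ↑X ⊆ DBV u t ∧ IsAntichain (· ≤ ·) (X : Set (Fin t → Bool)) ∧ X.card = n}

/-!
Dropping the leading one identifies vectors with first coordinate `1` with subsets of a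
`(t-1)`-set, as ordered sets. Sperner's theorem therefore bounds every antichain of `DBV u t`
by `C(t-1, ⌊(t-1)/2⌋) = C(t-1, ⌈(t-1)/2⌉)`. Conversely, a vector whose tail has
`⌈(t-1)/2⌉` ones has only `⌊(t-1)/2⌋ ≤ u - 1` zeros, so it has airiness below `u`, and the
whole middle layer is an antichain inside `DBV u t`.
-/

open Finset

section ConsIndicator

variable {n : ℕ}

def consIndicator (s : Finset (Fin n)) : Fin (n + 1) → Bool :=
  Fin.cons true fun i => decide (i ∈ s)

@[simp]
theorem consIndicator_zero (s : Finset (Fin n)) : consIndicator s 0 = true := rfl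

@[simp]
theorem consIndicator_succ (s : Finset (Fin n)) (i : Fin n) :
    consIndicator s i.succ = decide (i ∈ s) := Fin.cons_succ _ _ _

theorem consIndicator_le_consIndicator_iff {s s' : Finset (Fin n)} :
    consIndicator s ≤ consIndicator s' ↔ s ⊆ s' := by
  rw [consIndicator, consIndicator, Fin.cons_le_cons]
  simp [Pi.le_def, Bool.le_iff_imp, subset_iff]

def consIndicatorEmbedding : Finset (Fin n) ↪o (Fin (n + 1) → Bool) :=
  OrderEmbedding.ofMapLEIff consIndicator fun _ _ => consIndicator_le_consIndicator_iff

theorem mem_range_consIndicator {x : Fin (n + 1) → Bool} (hx : x 0 = true) :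
    x ∈ Set.range consIndicator :=
  ⟨univ.filter fun i => x i.succ, funext fun i => by cases i using Fin.cases <;> simp [hx]⟩

theorem card_filter_consIndicator_eq_false (s : Finset (Fin n)) :
    #{i | consIndicator s i = false} = n - #s := by
  rw [Fin.card_filter_univ_succ]
  simp [filter_not, card_univ_sdiff]

end ConsIndicator

theorem card_le_choose_of_isAntichain {n : ℕ} {X : Finset (Fin (n + 1) → Bool)}
    (hX : ∀ x ∈ X, x 0 = true) (hanti : IsAntichain (· ≤ ·) (X : Set (Fin (n + 1) → Bool))) :
    #X ≤ n.choose (n / 2) := by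
  classical
  have hinj : Function.Injective (consIndicator (n := n)) := consIndicatorEmbedding.injective
  have hpre : IsAntichain (· ⊆ ·) (consIndicator ⁻¹' (X : Set (Fin (n + 1) → Bool))) :=
    hanti.preimage_embedding consIndicatorEmbedding
  calc #X = #(X.preimage consIndicator hinj.injOn) := by
        rw [card_preimage, filter_true_of_mem fun x hx => mem_range_consIndicator (hX x hx)]
    _ ≤ n.choose (n / 2) := by
        rw [← coe_preimage _ hinj.injOn] at hpre
        simpa only [Fintype.card_fin] using hpre.sperner

theorem air_le_card_filter_eq_false {t : ℕ} (x : Fin t → Bool) :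
    air x ≤ #{i | x i = false} := by
  refine csSup_le ⟨0, 0, by omega, fun i h1 h2 => by omega⟩ ?_
  rintro k ⟨j, hjk, hwindow⟩
  have hsub : Ico j (j + k) ⊆ ({i | x i = false} : Finset (Fin t)).image Fin.val := by
    intro m hm
    obtain ⟨hjm, hmk⟩ := mem_Ico.1 hm
    exact mem_image.2 ⟨⟨m, by omega⟩, by simpa using hwindow ⟨m, by omega⟩ hjm hmk, rfl⟩
  calc k = #(Ico j (j + k)) := by simp
    _ ≤ _ := card_le_card hsub
    _ ≤ _ := card_image_le

theorem consIndicator_mem_DBV {u n : ℕ} {s : Finset (Fin n)} (hs : n - #s < u) :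
    consIndicator s ∈ DBV u (n + 1) := by
  refine ⟨fun i hi => by obtain rfl : i = 0 := Fin.ext hi; rfl, ?_⟩
  calc air (consIndicator s) ≤ #{i | consIndicator s i = false} := air_le_card_filter_eq_false _
    _ = n - #s := card_filter_consIndicator_eq_false s
    _ < u := hs

/-- `⌈(t-1)/2⌉` is written `(t - 1 + 1) / 2` in natural-number arithmetic. -/
theorem sba_eq_of_large_u (u t : ℕ) (hu : 0 < u) (ht : 0 < t)
    (h : (t - 1 + 1) / 2 ≤ u - 1) :
    sba u t = Nat.choose (t - 1) ((t - 1 + 1) / 2) := by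
  obtain ⟨n, rfl⟩ := Nat.exists_eq_add_one_of_ne_zero ht.ne'
  simp only [Nat.add_sub_cancel] at h ⊢
  refine IsGreatest.csSup_eq ⟨⟨(powersetCard ((n + 1) / 2) univ).map
    consIndicatorEmbedding.toEmbedding, ?_, ?_, ?_⟩, ?_⟩
  · rw [coe_map, Set.image_subset_iff]
    intro s hs
    exact consIndicator_mem_DBV (by rw [(mem_powersetCard.1 hs).2]; omega)
  · rw [coe_map]
    exact (Set.sized_powersetCard _ _).isAntichain.image_embedding consIndicatorEmbedding
  · simp
  · rintro _ ⟨X, hX, hanti, rfl⟩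
    calc #X ≤ n.choose (n / 2) := card_le_choose_of_isAntichain (fun x hx => (hX hx).1 0 rfl) hanti
      _ = n.choose ((n + 1) / 2) := Nat.choose_symm_of_eq_add (by omega)
end

section
/- Let u and t be positive integers with u − 1 ≤ ⌈(t−1)/2⌉. Then sba(u,t), the maximum size of an antichain in DBV(u,t), is at least the binomial coefficient C(t−1, u−1); indeed, the bit vectors (1, x_2, …, x_t) with exactly u−1 zero entries all belong to DBV(u,t) and form an antichain of that size. -/
/-!
A bit vector with exactly `u - 1` zero entries cannot contain a run of `u` zeros, so it lies in
`DBV u t`. Two distinct vectors with the same number of zeros are incomparable, since `x ≤ y`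
makes the zero set of `y` a subset of that of `x`. Recording the zero set identifies these vectors
with the `(u - 1)`-subsets of the `t - 1` coordinates after the first one.
-/

open Finset

def zeroSet {t : ℕ} (x : Fin t → Bool) : Finset (Fin t) :=
  univ.filter fun i => x i = false

@[simp]
lemma mem_zeroSet {t : ℕ} {x : Fin t → Bool} {i : Fin t} : i ∈ zeroSet x ↔ x i = false := by
  simp [zeroSet]

lemma zeroSet_injective {t : ℕ} : Function.Injective (zeroSet (t := t)) := by
  intro x y hxy
  funext i
  simpa using congrArg (i ∈ ·) hxy

lemma zeroSet_subset_of_le {t : ℕ} {x y : Fin t → Bool} (h : x ≤ y) : zeroSet y ⊆ zeroSet x := by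
  intro i hi
  rw [mem_zeroSet] at hi ⊢
  have hxy := h i
  rw [hi] at hxy
  exact le_bot_iff.mp hxy

lemma isAntichain_of_card_zeroSet_eq {t k : ℕ} {X : Set (Fin t → Bool)}
    (hX : ∀ x ∈ X, #(zeroSet x) = k) : IsAntichain (· ≤ ·) X := by
  intro x hx y hy hne hle
  refine hne (zeroSet_injective ?_)
  exact (eq_of_subset_of_card_le (zeroSet_subset_of_le hle) (by rw [hX x hx, hX y hy])).symm

lemma air_le_card_zeroSet {t : ℕ} (x : Fin t → Bool) : air x ≤ #(zeroSet x) := by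
  refine csSup_le ⟨0, 0, Nat.zero_le t, fun i _ hi => absurd hi (Nat.not_lt_zero _)⟩ ?_
  rintro v ⟨j, hjv, hrun⟩
  have hsub : (Ico j (j + v)).attachFin (fun m hm => by simp at hm; omega) ⊆ zeroSet x := by
    intro i hi
    simp only [mem_attachFin, mem_Ico] at hi
    exact mem_zeroSet.2 (hrun i hi.1 hi.2)
  simpa using card_le_card hsub

lemma card_filter_val_ne_zero (t : ℕ) : #{i : Fin t | i.val ≠ 0} = t - 1 := by
  cases t with
  | zero => simp
  | succ n =>
    rw [show ({i : Fin (n + 1) | i.val ≠ 0} : Finset _) = univ.erase 0 by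
        ext i; simp only [mem_filter, mem_univ, true_and, mem_erase, and_true, ne_eq, Fin.ext_iff,
          Fin.val_zero],
      card_erase_of_mem (mem_univ 0), card_univ, Fintype.card_fin, Nat.add_sub_cancel]

lemma image_zeroSet_setOf_card_zeroSet_eq (t k : ℕ) :
    zeroSet '' {x : Fin t → Bool | (∀ i : Fin t, i.val = 0 → x i = true) ∧ #(zeroSet x) = k} =
      powersetCard k {i : Fin t | i.val ≠ 0} := by
  ext s
  simp only [Set.mem_image, Set.mem_ofPred_eq, mem_coe, mem_powersetCard, subset_iff, mem_filter,
    mem_univ, true_and]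
  constructor
  · rintro ⟨x, ⟨hx0, hk⟩, rfl⟩
    refine ⟨fun i hi h0 => ?_, hk⟩
    simp [hx0 i h0] at hi
  · rintro ⟨hs, hk⟩
    have hzero : zeroSet (fun i => decide (i ∉ s)) = s := by ext; simp
    refine ⟨fun i => decide (i ∉ s), ⟨fun i h0 => ?_, by rwa [hzero]⟩, hzero⟩
    simpa using fun hi => hs hi h0

lemma ncard_setOf_card_zeroSet_eq (t k : ℕ) :
    {x : Fin t → Bool | (∀ i : Fin t, i.val = 0 → x i = true) ∧ #(zeroSet x) = k}.ncard =
      Nat.choose (t - 1) k := by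
  rw [← Set.ncard_image_of_injective _ zeroSet_injective, image_zeroSet_setOf_card_zeroSet_eq,
    Set.ncard_coe_finset, card_powersetCard, card_filter_val_ne_zero]

lemma ncard_le_sba {u t : ℕ} {X : Set (Fin t → Bool)} (hX : X ⊆ DBV u t)
    (hA : IsAntichain (· ≤ ·) X) : X.ncard ≤ sba u t := by
  refine le_csSup ⟨Fintype.card (Fin t → Bool), ?_⟩ ⟨X.toFinite.toFinset, by simpa, by simpa,
    (Set.ncard_eq_toFinset_card X).symm⟩
  rintro n ⟨Y, -, -, rfl⟩
  exact Y.card_le_univ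

theorem sba_ge_choose_general (u t : ℕ) (hu : 0 < u) :
    Nat.choose (t - 1) (u - 1) ≤ sba u t ∧
    ∀ X : Set (Fin t → Bool),
      X = {x | (∀ i : Fin t, i.val = 0 → x i = true) ∧
               (Finset.univ.filter fun i : Fin t => x i = false).card = u - 1} →
      X ⊆ DBV u t ∧ IsAntichain (· ≤ ·) X ∧ X.ncard = Nat.choose (t - 1) (u - 1) := by
  have key : ∀ X : Set (Fin t → Bool),
      X = {x | (∀ i : Fin t, i.val = 0 → x i = true) ∧ #(zeroSet x) = u - 1} →
      X ⊆ DBV u t ∧ IsAntichain (· ≤ ·) X ∧ X.ncard = Nat.choose (t - 1) (u - 1) := by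
    rintro X rfl
    refine ⟨fun x hx => ⟨hx.1, ?_⟩, isAntichain_of_card_zeroSet_eq fun x hx => hx.2,
      ncard_setOf_card_zeroSet_eq t (u - 1)⟩
    exact ((air_le_card_zeroSet x).trans_eq hx.2).trans_lt (Nat.sub_one_lt hu.ne')
  obtain ⟨hsub, hanti, hcard⟩ := key _ rfl
  exact ⟨hcard ▸ ncard_le_sba hsub hanti, key⟩

/-- For positive integers `u` and `t` with `u - 1 ≤ ⌈(t-1)/2⌉` (the ceiling
`⌈(t-1)/2⌉` is `(t - 1 + 1) / 2` in natural-number arithmetic), the maximum antichain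
size `sba u t` in `DBV u t` is at least the binomial coefficient `C(t - 1, u - 1)`;
indeed, the set of bit vectors with first coordinate `1` (`true`) and exactly `u - 1`
zero (`false`) entries is contained in `DBV u t`, is an antichain, and has exactly
`C(t - 1, u - 1)` elements. -/
theorem sba_ge_choose (u t : ℕ) (hu : 0 < u) (ht : 0 < t)
    (h : u - 1 ≤ (t - 1 + 1) / 2) :
    Nat.choose (t - 1) (u - 1) ≤ sba u t ∧
    ∀ X : Set (Fin t → Bool),
      X = {x | (∀ i : Fin t, i.val = 0 → x i = true) ∧
               (Finset.univ.filter fun i : Fin t => x i = false).card = u - 1} →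
      X ⊆ DBV u t ∧ IsAntichain (· ≤ ·) X ∧ X.ncard = Nat.choose (t - 1) (u - 1) :=
  sba_ge_choose_general u t hu
end

section
/- Let u and t be positive integers and let i ∈ {1, …, min(u,t) − 1}. Then the pair (C(t−1, i−1), C(t−1, i)) belongs to tra(u,t); that is, there exist antichains X and Y in DBV(u,t) with |X| = C(t−1, i−1) and |Y| = C(t−1, i) such that x ≰ y for every x ∈ X and y ∈ Y. (Witnesses: X is the set of vectors in DBV(u,t) with exactly i−1 zero entries and Y is the set of vectors in DBV(u,t) with exactly i zero entries.) -/
/-- `tra u t`: the set of pairs `(|X|, |Y|)` where `X` and `Y` are antichains in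
`DBV u t` such that `x ≰ y` for all `x ∈ X` and `y ∈ Y`. -/
def tra (u t : ℕ) : Set (ℕ × ℕ) :=
  {p | ∃ X Y : Finset (Fin t → Bool),
    ↑X ⊆ DBV u t ∧ ↑Y ⊆ DBV u t ∧
    IsAntichain (· ≤ ·) (X : Set (Fin t → Bool)) ∧
    IsAntichain (· ≤ ·) (Y : Set (Fin t → Bool)) ∧
    (∀ x ∈ X, ∀ y ∈ Y, ¬ x ≤ y) ∧ p = (X.card, Y.card)}

/-! If `x ≤ y` componentwise then the zero positions of `y` are among those of `x`, so the vectors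
of `DBV` with a fixed number of zeros form an antichain, and none with `i - 1` zeros lies below one
with `i` zeros. A vector with `k < u` zeros has airiness at most `k`, and those with first
coordinate `1` correspond to the `k`-subsets of the remaining `t - 1` coordinates. -/

open Finset

section Zeros

variable {α : Type*} [Fintype α]

def zeros (x : α → Bool) : Finset α :=
  {j | x j = false}

@[simp]
lemma mem_zeros {x : α → Bool} {j : α} : j ∈ zeros x ↔ x j = false := by
  simp [zeros]

lemma zeros_injective : Function.Injective (zeros (α := α)) := by
  intro x y h
  funext j
  have hj : x j = false ↔ y j = false := by simpa using Finset.ext_iff.mp h j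
  cases hx : x j <;> cases hy : y j <;> simp_all

lemma zeros_antitone : Antitone (zeros (α := α)) := by
  intro x y hxy j hj
  rw [mem_zeros] at hj ⊢
  exact Bool.eq_false_of_le_false (hj ▸ hxy j)

lemma zeros_strictAnti : StrictAnti (zeros (α := α)) :=
  zeros_antitone.strictAnti_of_injective zeros_injective

end Zeros

lemma air_le_card_zeros {t : ℕ} (x : Fin t → Bool) : air x ≤ #(zeros x) := by
  refine csSup_le' ?_
  rintro v ⟨j, hjv, hrun⟩
  calc v = #(Ico j (j + v)) := by simp
    _ ≤ #((zeros x).map Fin.valEmbedding) := by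
      refine card_le_card fun m hm => ?_
      rw [mem_Ico] at hm
      simp only [mem_map, Fin.valEmbedding_apply]
      exact ⟨⟨m, by omega⟩, mem_zeros.mpr (hrun ⟨m, by omega⟩ hm.1 hm.2), rfl⟩
    _ = #(zeros x) := card_map _

def level (t k : ℕ) : Finset (Fin t → Bool) :=
  {x | (∀ i : Fin t, i.val = 0 → x i = true) ∧ #(zeros x) = k}

lemma mem_level {t k : ℕ} {x : Fin t → Bool} :
    x ∈ level t k ↔ (∀ i : Fin t, i.val = 0 → x i = true) ∧ #(zeros x) = k := by
  simp [level]

lemma card_level (t k : ℕ) : #(level t k) = (t - 1).choose k := by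
  rw [← card_filter_val_ne_zero, ← card_powersetCard]
  refine card_nbij' zeros (fun S j => decide (j ∉ S)) ?_ ?_ ?_ ?_
  · intro x hx
    rw [mem_coe, mem_level] at hx
    rw [mem_coe, mem_powersetCard, hx.2]
    refine ⟨fun j hj => ?_, rfl⟩
    rw [mem_zeros] at hj
    simpa using fun h0 => by simp [hx.1 j h0] at hj
  · intro S hS
    rw [mem_coe, mem_powersetCard] at hS
    have hzeros : zeros (fun j => decide (j ∉ S)) = S := by ext j; simp
    rw [mem_coe, mem_level, hzeros]
    refine ⟨fun j h0 => ?_, hS.2⟩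
    have hjS : j ∉ S := fun hj => by simpa [h0] using hS.1 hj
    simpa using hjS
  · intro x _
    funext j
    simp
  · intro S _
    ext j
    simp

lemma level_subset_DBV {u t k : ℕ} (hk : k < u) : ↑(level t k) ⊆ DBV u t := by
  intro x hx
  rw [mem_coe, mem_level] at hx
  exact ⟨hx.1, (air_le_card_zeros x).trans_lt (hx.2 ▸ hk)⟩

lemma isAntichain_level (t k : ℕ) : IsAntichain (· ≤ ·) (level t k : Set (Fin t → Bool)) := by
  intro x hx y hy hne hle
  rw [mem_coe, mem_level] at hx hy
  have := card_lt_card (zeros_strictAnti (lt_of_le_of_ne hle hne))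
  omega

lemma not_le_of_mem_level_of_lt {t j k : ℕ} (hjk : j < k) {x y : Fin t → Bool}
    (hx : x ∈ level t j) (hy : y ∈ level t k) : ¬ x ≤ y := by
  intro hle
  rw [mem_level] at hx hy
  have := card_le_card (zeros_antitone hle)
  omega

theorem choose_pair_mem_tra_general (u t : ℕ)
    (i : ℕ) (hi1 : 1 ≤ i) (hi2 : i ≤ min u t - 1) :
    (Nat.choose (t - 1) (i - 1), Nat.choose (t - 1) i) ∈ tra u t := by
  refine ⟨level t (i - 1), level t i, level_subset_DBV (by omega), level_subset_DBV (by omega),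
    isAntichain_level t (i - 1), isAntichain_level t i,
    fun x hx y hy => not_le_of_mem_level_of_lt (by omega) hx hy, ?_⟩
  rw [card_level, card_level]

/-- For positive integers `u` and `t` and any `i` with `1 ≤ i ≤ min u t - 1`, the pair
`(C(t-1, i-1), C(t-1, i))` belongs to `tra u t`: there are antichains `X` and `Y` in
`DBV u t` of these sizes with `x ≰ y` for every `x ∈ X` and `y ∈ Y`. -/
theorem choose_pair_mem_tra (u t : ℕ) (hu : 0 < u) (ht : 0 < t)
    (i : ℕ) (hi1 : 1 ≤ i) (hi2 : i ≤ min u t - 1) :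
    (Nat.choose (t - 1) (i - 1), Nat.choose (t - 1) i) ∈ tra u t :=
  choose_pair_mem_tra_general u t i hi1 hi2
end
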